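/- arXiv:2006.11709 — 6 statements merged into one kernel-verified Lean document; each statement's English description precedes it below -/
import Mathlib

section
/- For any nonzero vectors f, g in a complex Hilbert space H, min over unimodular ξ ∈ ℂ of ‖f − ξg‖ is at most √2 · min over c ∈ ℂ of ‖f − cg‖ plus |‖f‖ − ‖g‖|. -/
open scoped InnerProductSpace

lemma unimodular_aux (c : ℂ) : ∃ ξ : ℂ, ‖ξ‖ = 1 ∧ ‖c - ξ‖ = |‖c‖ - 1| := by
  by_cases hc : c = 0
  · exact ⟨1, by simp, by simp [hc]⟩
  · have hcn : (0:ℝ) < ‖c‖ := norm_pos_iff.mpr hc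
    have hcn' : ((‖c‖ : ℝ) : ℂ) ≠ 0 := by exact_mod_cast hcn.ne'
    refine ⟨c / ‖c‖, ?_, ?_⟩
    · rw [norm_div, Complex.norm_real, Real.norm_eq_abs, abs_norm, div_self hcn.ne']
    · have h1 : c - c / ‖c‖ = c * (((‖c‖ - 1 : ℝ) : ℂ) / ((‖c‖ : ℝ) : ℂ)) := by
        push_cast
        rw [sub_div, div_self hcn', mul_sub, mul_one, mul_one_div]
      rw [h1, norm_mul, norm_div, Complex.norm_real, Complex.norm_real,
        Real.norm_eq_abs, Real.norm_eq_abs, abs_norm]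
      rw [mul_comm, div_mul_cancel₀ _ hcn.ne']

/-- For any nonzero `f, g` in a complex inner product space, the infimum over unimodular
`ξ ∈ ℂ` of `‖f - ξ • g‖` is at most `√2` times the distance from `f` to the line spanned
by `g`, plus `|‖f‖ - ‖g‖|`. -/
theorem stmt0 {H : Type*} [NormedAddCommGroup H] [InnerProductSpace ℂ H]
    (f g : H) (hf : f ≠ 0) (hg : g ≠ 0) :
    (⨅ ξ : {ξ : ℂ // ‖ξ‖ = 1}, ‖f - (ξ : ℂ) • g‖) ≤
      Real.sqrt 2 * (⨅ c : ℂ, ‖f - c • g‖) + |‖f‖ - ‖g‖| := by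
  set c₀ : ℂ := ⟪g, f⟫_ℂ / ((‖g‖ : ℂ) ^ 2) with hc₀
  have hgnorm : (0:ℝ) < ‖g‖ := norm_pos_iff.mpr hg
  have horth : ⟪g, f - c₀ • g⟫_ℂ = 0 := by
    rw [inner_sub_right, inner_smul_right, hc₀, inner_self_eq_norm_sq_to_K]
    have : ((‖g‖ : ℂ)) ^ 2 ≠ 0 := by
      simp [hgnorm.ne']
    field_simp
    simp [hgnorm.ne']
  have horth' : ⟪f - c₀ • g, g⟫_ℂ = 0 := by
    rw [← inner_conj_symm, horth, map_zero]
  set D := ‖f - c₀ • g‖ with hD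
  have hDnn : 0 ≤ D := norm_nonneg _
  have key : ∀ c : ℂ, ‖f - c • g‖ ^ 2 = D ^ 2 + ‖(c₀ - c) • g‖ ^ 2 := by
    intro c
    have hsplit : f - c • g = (f - c₀ • g) + (c₀ - c) • g := by
      rw [sub_smul]; abel
    have hp := norm_add_sq_eq_norm_sq_add_norm_sq_of_inner_eq_zero (f - c₀ • g)
      ((c₀ - c) • g) (by rw [inner_smul_right, horth', mul_zero])
    rw [hsplit]
    simp only [pow_two]
    exact hp
  have hD_le : ∀ c : ℂ, D ≤ ‖f - c • g‖ := by
    intro c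
    nlinarith [key c, norm_nonneg (f - c • g), norm_nonneg ((c₀ - c) • g)]
  have hinf_c : D ≤ ⨅ c : ℂ, ‖f - c • g‖ := le_ciInf hD_le
  -- choose the unimodular ξ₀
  obtain ⟨ξ₀, hξ₀, hdist⟩ := unimodular_aux c₀
  set a := ‖c₀‖ * ‖g‖ with ha
  have hann : 0 ≤ a := mul_nonneg (norm_nonneg _) hgnorm.le
  have hfa : ‖f‖ ^ 2 = D ^ 2 + a ^ 2 := by
    have := key 0
    simpa [norm_smul, ha] using this
  set t := |‖f‖ - ‖g‖| with ht
  have htnn : 0 ≤ t := abs_nonneg _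
  have hX2 : ‖f - ξ₀ • g‖ ^ 2 = D ^ 2 + (a - ‖g‖) ^ 2 := by
    rw [key ξ₀, norm_smul, hdist]
    rw [ha]
    rw [show |‖c₀‖ - 1| * ‖g‖ = |(‖c₀‖ - 1) * ‖g‖| by
      rw [abs_mul, abs_of_nonneg hgnorm.le]]
    rw [sq_abs]
    ring_nf
  have h1 : a ≤ ‖f‖ := by nlinarith [norm_nonneg f]
  have h2 : ‖f‖ ≤ D + a := by nlinarith [norm_nonneg f]
  have hs : |a - ‖g‖| ≤ D + t := by
    calc |a - ‖g‖| ≤ |a - ‖f‖| + |‖f‖ - ‖g‖| := abs_sub_le a ‖f‖ ‖g‖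
      _ ≤ D + t := by
          rw [abs_sub_comm, abs_of_nonneg (by linarith)]
          linarith
  have hsqrt2 : Real.sqrt 2 ^ 2 = 2 := Real.sq_sqrt (by norm_num)
  have hsqrt2nn : (1:ℝ) ≤ Real.sqrt 2 := by
    nlinarith [Real.sqrt_nonneg 2]
  have hsabs : (a - ‖g‖) ^ 2 ≤ (D + t) ^ 2 := by
    nlinarith [abs_nonneg (a - ‖g‖), sq_abs (a - ‖g‖)]
  have hY : (0:ℝ) ≤ Real.sqrt 2 * D + t := by positivity
  have hsq : ‖f - ξ₀ • g‖ ^ 2 ≤ (Real.sqrt 2 * D + t) ^ 2 := by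
    nlinarith [hX2, hsabs, hsqrt2, mul_nonneg (mul_nonneg hDnn htnn)
      (by linarith : (0:ℝ) ≤ Real.sqrt 2 - 1)]
  have hXs : ‖f - ξ₀ • g‖ ≤ Real.sqrt 2 * D + t := by
    have h := Real.sqrt_le_sqrt hsq
    rwa [Real.sqrt_sq (norm_nonneg _), Real.sqrt_sq hY] at h
  have hbdd : BddBelow (Set.range fun ξ : {ξ : ℂ // ‖ξ‖ = 1} => ‖f - (ξ : ℂ) • g‖) := by
    refine ⟨0, ?_⟩
    rintro x ⟨ξ, rfl⟩
    exact norm_nonneg _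
  calc (⨅ ξ : {ξ : ℂ // ‖ξ‖ = 1}, ‖f - (ξ : ℂ) • g‖) ≤ ‖f - ξ₀ • g‖ :=
        ciInf_le hbdd ⟨ξ₀, hξ₀⟩
    _ ≤ Real.sqrt 2 * D + t := hXs
    _ ≤ Real.sqrt 2 * (⨅ c : ℂ, ‖f - c • g‖) + t := by
        have := mul_le_mul_of_nonneg_left hinf_c (by linarith : (0:ℝ) ≤ Real.sqrt 2)
        linarith
end

section
/- Let f, g be elements of a complex Hilbert space with g ≠ 0, and let c* = ⟨f,g⟩/‖g‖² be the minimizer of c ↦ ‖f − cg‖². Let ξ* be a unimodular constant with ⟨f, ξ* g⟩ real and nonnegative, and r_N = ‖f‖/‖g‖. Then ‖f − c* g‖² ≥ (1/2)‖f − r_N ξ* g‖². -/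
/-- If `c* = ⟪g, f⟫ / ‖g‖²` is the minimizer of `c ↦ ‖f - c • g‖²`, `ξ*` is unimodular with
`⟪f, ξ* • g⟫` real and nonnegative, and `r_N = ‖f‖ / ‖g‖`, then
`‖f - c* • g‖² ≥ (1/2) ‖f - r_N ξ* • g‖²`. -/
theorem stmt1 {H : Type*} [NormedAddCommGroup H] [InnerProductSpace ℂ H]
    (f g : H) (hg : g ≠ 0) (ξ : ℂ) (hξ : ‖ξ‖ = 1)
    (hre : ((inner ℂ f (ξ • g) : ℂ)).im = 0) (hpos : 0 ≤ ((inner ℂ f (ξ • g) : ℂ)).re) :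
    ‖f - ((inner ℂ g f : ℂ) / (‖g‖ ^ 2 : ℂ)) • g‖ ^ 2 ≥
      (1 / 2 : ℝ) * ‖f - ((‖f‖ / ‖g‖ : ℝ) : ℂ) • (ξ • g)‖ ^ 2 := by
  have hb : (0:ℝ) < ‖g‖ := norm_pos_iff.mpr hg
  set a := ‖f‖ with ha
  set b := ‖g‖ with hbdef
  set w : ℂ := inner ℂ f g with hw
  have hgf : (inner ℂ g f : ℂ) = starRingEnd ℂ w := (inner_conj_symm g f).symm
  have hK : ‖w‖ ≤ a * b := norm_inner_le_norm f g
  have hKnn : (0:ℝ) ≤ ‖w‖ := norm_nonneg _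
  have hinner : (inner ℂ f (ξ • g) : ℂ) = ξ * w := inner_smul_right f g ξ
  have him : (ξ * w).im = 0 := by rw [← hinner]; exact hre
  have hre' : 0 ≤ (ξ * w).re := by rw [← hinner]; exact hpos
  have hzr : (ξ * w) = (((ξ * w).re : ℝ) : ℂ) := Complex.ext rfl (by simp [him])
  have hnormw : ‖w‖ = (ξ * w).re := by
    have h : ‖ξ * w‖ = ‖w‖ := by rw [norm_mul, hξ, one_mul]
    rw [← h, hzr, Complex.norm_real, Real.norm_eq_abs, abs_of_nonneg hre', Complex.ofReal_re]
  -- LHS expansion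
  have hL : ‖f - ((inner ℂ g f : ℂ) / (b ^ 2 : ℂ)) • g‖ ^ 2 = a ^ 2 - ‖w‖ ^ 2 / b ^ 2 := by
    rw [@norm_sub_sq ℂ]
    have h1 : (inner ℂ f ((((inner ℂ g f : ℂ)) / (b ^ 2 : ℂ)) • g) : ℂ)
        = (starRingEnd ℂ w / (b^2 : ℂ)) * w := by
      rw [inner_smul_right, hgf, ← hw]
    rw [h1]
    have h2 : ‖(((inner ℂ g f : ℂ)) / (b ^ 2 : ℂ)) • g‖ ^ 2 = ‖w‖^2 / b^2 := by
      rw [norm_smul, hgf, mul_pow, norm_div, RCLike.norm_conj]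
      have hb2 : ‖((b:ℂ)^2)‖ = b^2 := by
        rw [← Complex.ofReal_pow, Complex.norm_real, Real.norm_eq_abs,
          abs_of_nonneg (by positivity)]
      rw [hb2, ← hbdef]
      field_simp
    rw [h2]
    have h3 : RCLike.re ((starRingEnd ℂ w / (b^2 : ℂ)) * w) = ‖w‖^2 / b^2 := by
      have hc : (starRingEnd ℂ w / (b^2 : ℂ)) * w = ((‖w‖^2 / b^2 : ℝ) : ℂ) := by
        rw [div_mul_eq_mul_div, mul_comm, Complex.mul_conj, Complex.normSq_eq_norm_sq]
        push_cast
        ring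
      rw [hc]; exact RCLike.ofReal_re _
    rw [h3]
    ring
  -- RHS expansion
  have hR : ‖f - ((a / b : ℝ) : ℂ) • (ξ • g)‖ ^ 2 = 2 * a^2 - 2 * (a / b) * ‖w‖ := by
    rw [@norm_sub_sq ℂ]
    have h1 : (inner ℂ f (((a / b : ℝ) : ℂ) • (ξ • g)) : ℂ) = ((a/b : ℝ):ℂ) * (ξ * w) := by
      rw [inner_smul_right, hinner]
    rw [h1]
    have h2 : RCLike.re (((a/b : ℝ):ℂ) * (ξ * w)) = (a/b) * ‖w‖ := by
      rw [hnormw]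
      simp [Complex.mul_re, him]
    rw [h2]
    have h3 : ‖((a / b : ℝ) : ℂ) • (ξ • g)‖ ^ 2 = a^2 := by
      rw [norm_smul, norm_smul, hξ, one_mul, Complex.norm_real, Real.norm_eq_abs,
        abs_of_nonneg (by positivity), ← hbdef]
      field_simp
    rw [h3]
    ring
  rw [hL, hR]
  have key : 0 ≤ (a/b) * ‖w‖ - ‖w‖^2 / b^2 := by
    have h1 : (a/b) * ‖w‖ - ‖w‖^2 / b^2 = (a*b*‖w‖ - ‖w‖^2) / b^2 := by
      field_simp
    rw [h1]
    apply div_nonneg _ (by positivity)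
    nlinarith
  linarith
end

section
/- Let c_k = e^{−β|k|/p} for k ∈ ℤ with β > 0 and 1 ≤ p < ∞. Consider the weighted line graph on ℤ where vertex weights satisfy A^p Σ_{j=k−N+1}^{k} e^{−β|j|} ≤ w_k ≤ B^p Σ_{j=k−N+1}^{k} e^{−β|j|} and edge weights satisfy w_{k,k−1} = Σ_{j=k−N+1}^{k−1} e^{−β|j|} for fixed N ≥ 2 and constants 0 < A ≤ B. Then the Cheeger constant of this graph, computed as the infimum over finite intervals [k, ℓ]_ℤ of (w_{k,k−1} + w_{ℓ,ℓ+1}) / min(Σ_{j∈[k,ℓ]} w_j, Σ_{j∉[k,ℓ]} w_j), is bounded below by ((N−1)/(N B^p)) (1 − e^{−β}) e^{−2Nβ} > 0. -/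
open scoped BigOperators

private lemma sum_Icc_map (g : ℤ → ℝ) (a b : ℤ) :
    ∑ j ∈ Finset.Icc a b, g j = ∑ t ∈ Finset.range (b + 1 - a).toNat, g (a + t) := by
  rw [Int.Icc_eq_finset_map, Finset.sum_map]
  rfl

private lemma sum_Icc_map' (g : ℤ → ℝ) (a b : ℤ) :
    ∑ j ∈ Finset.Icc a b, g j = ∑ t ∈ Finset.range (b + 1 - a).toNat, g (b - t) := by
  rw [Int.Icc_eq_finset_map, Finset.sum_map, ← Finset.sum_range_reflect]
  refine Finset.sum_congr rfl fun t ht => ?_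
  rw [Finset.mem_range] at ht
  congr 1
  simp only [Function.Embedding.trans_apply, Nat.castEmbedding_apply, addLeftEmbedding_apply]
  omega

private lemma geo_le {β : ℝ} (hβ : 0 < β) (n : ℕ) :
    ∑ t ∈ Finset.range n, Real.exp (-β) ^ t ≤ (1 - Real.exp (-β))⁻¹ := by
  have hx0 : (0:ℝ) ≤ Real.exp (-β) := (Real.exp_pos _).le
  have hx1 : Real.exp (-β) < 1 := by rw [Real.exp_lt_one_iff]; linarith
  calc ∑ t ∈ Finset.range n, Real.exp (-β) ^ t
      ≤ ∑' t : ℕ, Real.exp (-β) ^ t :=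
        Summable.sum_le_tsum _ (fun i _ => pow_nonneg hx0 i) (summable_geometric_of_lt_one hx0 hx1)
    _ = (1 - Real.exp (-β))⁻¹ := tsum_geometric_of_lt_one hx0 hx1

private lemma G1 {β : ℝ} (hβ : 0 < β) {a : ℤ} (ha : 0 ≤ a) (b : ℤ) :
    ∑ j ∈ Finset.Icc a b, Real.exp (-β * |(j : ℝ)|)
      ≤ Real.exp (-β * (a : ℝ)) * (1 - Real.exp (-β))⁻¹ := by
  rw [sum_Icc_map]
  have : ∀ t ∈ Finset.range (b + 1 - a).toNat,
      Real.exp (-β * |((a + (t:ℤ) : ℤ) : ℝ)|) = Real.exp (-β * (a:ℝ)) * Real.exp (-β) ^ t := by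
    intro t _
    rw [← Real.exp_nat_mul, ← Real.exp_add]
    congr 1
    have h1 : (0:ℝ) ≤ ((a + (t:ℤ) : ℤ) : ℝ) := by
      push_cast
      have : (0:ℝ) ≤ (a:ℝ) := by exact_mod_cast ha
      positivity
    rw [abs_of_nonneg h1]
    push_cast
    ring
  rw [Finset.sum_congr rfl this, ← Finset.mul_sum]
  exact mul_le_mul_of_nonneg_left (geo_le hβ _) (Real.exp_pos _).le

private lemma G2 {β : ℝ} (hβ : 0 < β) {b : ℤ} (hb : b ≤ 0) (a : ℤ) :
    ∑ j ∈ Finset.Icc a b, Real.exp (-β * |(j : ℝ)|)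
      ≤ Real.exp (β * (b : ℝ)) * (1 - Real.exp (-β))⁻¹ := by
  rw [sum_Icc_map']
  have : ∀ t ∈ Finset.range (b + 1 - a).toNat,
      Real.exp (-β * |((b - (t:ℤ) : ℤ) : ℝ)|) = Real.exp (β * (b:ℝ)) * Real.exp (-β) ^ t := by
    intro t _
    rw [← Real.exp_nat_mul, ← Real.exp_add]
    congr 1
    have h1 : ((b - (t:ℤ) : ℤ) : ℝ) ≤ 0 := by
      push_cast
      have h2 : (b:ℝ) ≤ 0 := by exact_mod_cast hb
      have h3 : (0:ℝ) ≤ (t:ℝ) := Nat.cast_nonneg t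
      linarith
    rw [abs_of_nonpos h1]
    push_cast
    ring
  rw [Finset.sum_congr rfl this, ← Finset.mul_sum]
  exact mul_le_mul_of_nonneg_left (geo_le hβ _) (Real.exp_pos _).le

private lemma blockLB {β : ℝ} (hβ : 0 < β) (a b M : ℤ)
    (hM : ∀ j ∈ Finset.Icc a b, |(j : ℝ)| ≤ (M : ℝ)) :
    ((b + 1 - a).toNat : ℝ) * Real.exp (-β * (M : ℝ))
      ≤ ∑ j ∈ Finset.Icc a b, Real.exp (-β * |(j : ℝ)|) := by
  have h := Finset.card_nsmul_le_sum (Finset.Icc a b)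
      (fun j => Real.exp (-β * |(j : ℝ)|)) (Real.exp (-β * (M : ℝ)))
      (fun j hj => by
        apply Real.exp_le_exp.mpr
        have := hM j hj
        nlinarith [abs_nonneg ((j:ℝ))])
  rwa [Int.card_Icc, nsmul_eq_mul] at h

private lemma Sj_le {β : ℝ} (hβ : 0 < β) (N : ℕ) (j : ℤ) :
    ∑ i ∈ Finset.Icc (j - (N:ℤ) + 1) j, Real.exp (-β * |(i : ℝ)|)
      ≤ (N : ℝ) * Real.exp (β * ((N:ℝ) - 1)) * Real.exp (-β * |(j : ℝ)|) := by
  have h := Finset.sum_le_card_nsmul (Finset.Icc (j - (N:ℤ) + 1) j)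
      (fun i => Real.exp (-β * |(i : ℝ)|))
      (Real.exp (β * ((N:ℝ) - 1)) * Real.exp (-β * |(j : ℝ)|))
      (fun i hi => by
        rw [Finset.mem_Icc] at hi
        rw [← Real.exp_add]
        apply Real.exp_le_exp.mpr
        have h1 : |(i : ℝ)| = ((|i| : ℤ) : ℝ) := (Int.cast_abs).symm
        have h2 : |(j : ℝ)| = ((|j| : ℤ) : ℝ) := (Int.cast_abs).symm
        have h3 : |j| ≤ |i| + ((N:ℤ) - 1) := by
          rw [Int.abs_eq_natAbs, Int.abs_eq_natAbs]; omega
        have h4 : ((|j| : ℤ) : ℝ) ≤ ((|i| : ℤ) : ℝ) + ((N:ℝ) - 1) := by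
          exact_mod_cast h3
        rw [h1, h2]
        nlinarith)
  rw [Int.card_Icc] at h
  have hc : (((j + 1 - (j - (N:ℤ) + 1)).toNat : ℕ) : ℝ) = (N : ℝ) := by
    have h0 : (j + 1 - (j - (N:ℤ) + 1)).toNat = N := by omega
    rw [h0]
  calc ∑ i ∈ Finset.Icc (j - (N:ℤ) + 1) j, Real.exp (-β * |(i : ℝ)|)
      ≤ (j + 1 - (j - (N:ℤ) + 1)).toNat •
          (Real.exp (β * ((N:ℝ) - 1)) * Real.exp (-β * |(j : ℝ)|)) := h
    _ = (N : ℝ) * Real.exp (β * ((N:ℝ) - 1)) * Real.exp (-β * |(j : ℝ)|) := by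
        rw [nsmul_eq_mul, hc, mul_assoc]

private lemma fsummable {β : ℝ} (hβ : 0 < β) :
    Summable (fun j : ℤ => Real.exp (-β * |(j : ℝ)|)) := by
  have hx0 : (0:ℝ) ≤ Real.exp (-β) := (Real.exp_pos _).le
  have hx1 : Real.exp (-β) < 1 := by rw [Real.exp_lt_one_iff]; linarith
  have hgeo := summable_geometric_of_lt_one hx0 hx1
  apply Summable.of_nat_of_neg
  · apply hgeo.congr
    intro n
    rw [← Real.exp_nat_mul]
    congr 1
    rw [Int.cast_natCast, Nat.abs_cast]
    ring
  · apply hgeo.congr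
    intro n
    rw [← Real.exp_nat_mul]
    congr 1
    push_cast
    rw [abs_neg, Nat.abs_cast]
    ring

private lemma ftsum_le {β : ℝ} (hβ : 0 < β) :
    ∑' j : ℤ, Real.exp (-β * |(j : ℝ)|) ≤ 2 * (1 - Real.exp (-β))⁻¹ := by
  have hx0 : (0:ℝ) ≤ Real.exp (-β) := (Real.exp_pos _).le
  have hx1 : Real.exp (-β) < 1 := by rw [Real.exp_lt_one_iff]; linarith
  have hgeo := summable_geometric_of_lt_one hx0 hx1
  have h1 : (fun n : ℕ => Real.exp (-β * |((n : ℤ) : ℝ)|)) = fun n : ℕ => Real.exp (-β) ^ n := by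
    funext n
    rw [← Real.exp_nat_mul]
    congr 1
    rw [Int.cast_natCast, Nat.abs_cast]
    ring
  have h2 : (fun n : ℕ => Real.exp (-β * |(((-((n:ℤ) + 1)) : ℤ) : ℝ)|))
      = fun n : ℕ => Real.exp (-β) * Real.exp (-β) ^ n := by
    funext n
    rw [← Real.exp_nat_mul, ← Real.exp_add]
    congr 1
    push_cast
    rw [abs_neg, abs_of_nonneg (by positivity)]
    ring
  rw [tsum_of_nat_of_neg_add_one (by rw [h1]; exact hgeo)
      (by rw [h2]; exact hgeo.mul_left _)]
  rw [h1, h2, tsum_geometric_of_lt_one hx0 hx1, tsum_mul_left,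
    tsum_geometric_of_lt_one hx0 hx1]
  have hpos : (0:ℝ) < (1 - Real.exp (-β))⁻¹ := by
    apply inv_pos.mpr; linarith
  nlinarith

private def eqR (a : ℤ) : ℕ ≃ {j : ℤ // a ≤ j} where
  toFun n := ⟨a + n, by omega⟩
  invFun j := (j.1 - a).toNat
  left_inv n := by simp
  right_inv j := by
    ext
    simp only
    omega

private def eqL (b : ℤ) : ℕ ≃ {j : ℤ // j ≤ b} where
  toFun n := ⟨b - n, by omega⟩
  invFun j := (b - j.1).toNat
  left_inv n := by simp
  right_inv j := by
    ext
    simp only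
    omega

private lemma TR {β : ℝ} (hβ : 0 < β) {a : ℤ} (ha : 0 ≤ a) :
    ∑' x : {j : ℤ // a ≤ j}, Real.exp (-β * |((x : ℤ) : ℝ)|)
      ≤ Real.exp (-β * (a : ℝ)) * (1 - Real.exp (-β))⁻¹ := by
  have hx0 : (0:ℝ) ≤ Real.exp (-β) := (Real.exp_pos _).le
  have hx1 : Real.exp (-β) < 1 := by rw [Real.exp_lt_one_iff]; linarith
  rw [← (eqR a).tsum_eq]
  have h1 : ∀ n : ℕ, Real.exp (-β * |(((eqR a n : ℤ)) : ℝ)|)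
      = Real.exp (-β * (a : ℝ)) * Real.exp (-β) ^ n := by
    intro n
    rw [← Real.exp_nat_mul, ← Real.exp_add]
    congr 1
    show -β * |(((a + (n:ℤ) : ℤ)) : ℝ)| = _
    have h0 : (0:ℝ) ≤ (a:ℝ) := by exact_mod_cast ha
    rw [show (((a + (n:ℤ) : ℤ)) : ℝ) = (a:ℝ) + (n:ℝ) by push_cast; ring,
      abs_of_nonneg (by positivity)]
    ring
  rw [tsum_congr h1, tsum_mul_left, tsum_geometric_of_lt_one hx0 hx1]

private lemma TL {β : ℝ} (hβ : 0 < β) {b : ℤ} (hb : b ≤ 0) :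
    ∑' x : {j : ℤ // j ≤ b}, Real.exp (-β * |((x : ℤ) : ℝ)|)
      ≤ Real.exp (β * (b : ℝ)) * (1 - Real.exp (-β))⁻¹ := by
  have hx0 : (0:ℝ) ≤ Real.exp (-β) := (Real.exp_pos _).le
  have hx1 : Real.exp (-β) < 1 := by rw [Real.exp_lt_one_iff]; linarith
  rw [← (eqL b).tsum_eq]
  have h1 : ∀ n : ℕ, Real.exp (-β * |(((eqL b n : ℤ)) : ℝ)|)
      = Real.exp (β * (b : ℝ)) * Real.exp (-β) ^ n := by
    intro n
    rw [← Real.exp_nat_mul, ← Real.exp_add]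
    congr 1
    show -β * |(((b - (n:ℤ) : ℤ)) : ℝ)| = _
    have h0 : (b:ℝ) ≤ 0 := by exact_mod_cast hb
    rw [show (((b - (n:ℤ) : ℤ)) : ℝ) = (b:ℝ) - (n:ℝ) by push_cast; ring,
      abs_of_nonpos (by nlinarith [Nat.cast_nonneg (α := ℝ) n])]
    ring
  rw [tsum_congr h1, tsum_mul_left, tsum_geometric_of_lt_one hx0 hx1]

private lemma Ssummable {β : ℝ} (hβ : 0 < β) (N : ℕ) :
    Summable (fun j : ℤ => ∑ i ∈ Finset.Icc (j - (N:ℤ) + 1) j, Real.exp (-β * |(i : ℝ)|)) ∧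
    ∑' j : ℤ, (∑ i ∈ Finset.Icc (j - (N:ℤ) + 1) j, Real.exp (-β * |(i : ℝ)|))
      ≤ (N : ℝ) * (2 * (1 - Real.exp (-β))⁻¹) := by
  have hrw : (fun j : ℤ => ∑ i ∈ Finset.Icc (j - (N:ℤ) + 1) j, Real.exp (-β * |(i : ℝ)|))
      = fun j : ℤ => ∑ t ∈ Finset.range N, Real.exp (-β * |((j - (N:ℤ) + 1 + (t:ℤ) : ℤ) : ℝ)|) := by
    funext j
    rw [sum_Icc_map]
    have h0 : (j + 1 - (j - (N:ℤ) + 1)).toNat = N := by omega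
    rw [h0]
  have hterm : ∀ t : ℕ, Summable (fun j : ℤ =>
      Real.exp (-β * |((j - (N:ℤ) + 1 + (t:ℤ) : ℤ) : ℝ)|)) := by
    intro t
    have h := (Equiv.summable_iff (Equiv.addRight ((t:ℤ) + 1 - N))).mpr (fsummable hβ)
    apply h.congr
    intro j
    show Real.exp (-β * |((j + ((t:ℤ) + 1 - N) : ℤ) : ℝ)|) = _
    have h0 : (j + ((t:ℤ) + 1 - N) : ℤ) = j - (N:ℤ) + 1 + t := by omega
    rw [h0]
  have htsum : ∀ t : ℕ, ∑' j : ℤ, Real.exp (-β * |((j - (N:ℤ) + 1 + (t:ℤ) : ℤ) : ℝ)|)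
      = ∑' j : ℤ, Real.exp (-β * |(j : ℝ)|) := by
    intro t
    have h := (Equiv.addRight ((t:ℤ) + 1 - N)).tsum_eq
      (fun j : ℤ => Real.exp (-β * |(j : ℝ)|))
    rw [← h]
    apply tsum_congr
    intro j
    show _ = Real.exp (-β * |((j + ((t:ℤ) + 1 - N) : ℤ) : ℝ)|)
    have h0 : (j + ((t:ℤ) + 1 - N) : ℤ) = j - (N:ℤ) + 1 + t := by omega
    rw [h0]
  constructor
  · rw [hrw]
    exact summable_sum (fun t _ => hterm t)
  · rw [hrw, Summable.tsum_finsetSum (fun t _ => hterm t)]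
    calc ∑ t ∈ Finset.range N, ∑' j : ℤ, Real.exp (-β * |((j - (N:ℤ) + 1 + (t:ℤ) : ℤ) : ℝ)|)
        = ∑ t ∈ Finset.range N, ∑' j : ℤ, Real.exp (-β * |(j : ℝ)|) :=
          Finset.sum_congr rfl (fun t _ => htsum t)
      _ = (N : ℝ) * ∑' j : ℤ, Real.exp (-β * |(j : ℝ)|) := by
          rw [Finset.sum_const, Finset.card_range, nsmul_eq_mul]
      _ ≤ (N : ℝ) * (2 * (1 - Real.exp (-β))⁻¹) :=
          mul_le_mul_of_nonneg_left (ftsum_le hβ) (Nat.cast_nonneg N)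

private lemma key_alg0 {n bp d e : ℝ} (hn : n ≠ 0) (hbp : bp ≠ 0) (hd : d ≠ 0) :
    (n - 1) / (n * bp) * d * e * (bp * n * d⁻¹) = (n - 1) * e := by
  field_simp

private lemma key_alg1 {n bp d e g u : ℝ} (hn : n ≠ 0) (hbp : bp ≠ 0) (hd : d ≠ 0) :
    (n - 1) / (n * bp) * d * e * (bp * (n * g) * (u * d⁻¹)) = (n - 1) * (e * g * u) := by
  field_simp

private lemma key_alg2 {n bp d e g u v : ℝ} (hn : n ≠ 0) (hbp : bp ≠ 0) (hd : d ≠ 0) :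
    (n - 1) / (n * bp) * d * e * (bp * (n * g) * (u * d⁻¹ + v * d⁻¹))
      = (n - 1) * (e * g * u) + (n - 1) * (e * g * v) := by
  field_simp

set_option maxHeartbeats 1000000 in
/-- Line graph on `ℤ` with geometric data `|c_j|^p = e^{-β|j|}`: vertex weights `w k`
comparable (with constants `A^p ≤ B^p`) to `Σ_{j=k-N+1}^{k} e^{-β|j|}` and edge weights
`w_{k,k-1} = Σ_{j=k-N+1}^{k-1} e^{-β|j|}`.  The Cheeger constant, computed as the infimum
over finite intervals `[k,ℓ]` of boundary over minimum of inside/outside volume, is bounded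
below by the positive constant `((N-1)/(N B^p)) (1 - e^{-β}) e^{-2Nβ}`. -/
theorem stmt8 (β : ℝ) (hβ : 0 < β) (N : ℕ) (hN : 2 ≤ N) (A B p : ℝ)
    (hA : 0 < A) (hAB : A ≤ B) (hp : 1 ≤ p)
    (w : ℤ → ℝ)
    (hw : ∀ k : ℤ,
      A ^ p * (∑ j ∈ Finset.Icc (k - (N : ℤ) + 1) k, Real.exp (-β * |(j : ℝ)|)) ≤ w k ∧
      w k ≤ B ^ p * ∑ j ∈ Finset.Icc (k - (N : ℤ) + 1) k, Real.exp (-β * |(j : ℝ)|)) :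
    ((N : ℝ) - 1) / (N * B ^ p) * (1 - Real.exp (-β)) * Real.exp (-2 * N * β) ≤
        sInf {r : ℝ | ∃ k ℓ : ℤ, k ≤ ℓ ∧
          r = ((∑ j ∈ Finset.Icc (k - (N : ℤ) + 1) (k - 1), Real.exp (-β * |(j : ℝ)|)) +
                ∑ j ∈ Finset.Icc (ℓ + 1 - (N : ℤ) + 1) ℓ, Real.exp (-β * |(j : ℝ)|)) /
              min (∑ j ∈ Finset.Icc k ℓ, w j)
                (∑' j : {j : ℤ // j ∉ Finset.Icc k ℓ}, w (j : ℤ))} ∧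
      0 < ((N : ℝ) - 1) / (N * B ^ p) * (1 - Real.exp (-β)) * Real.exp (-2 * N * β) := by
  have hB : 0 < B := lt_of_lt_of_le hA hAB
  have hBp : (0:ℝ) < B ^ p := Real.rpow_pos_of_pos hB p
  have hx1 : Real.exp (-β) < 1 := by rw [Real.exp_lt_one_iff]; linarith
  have hden : (0:ℝ) < 1 - Real.exp (-β) := by linarith
  have hN2 : (2:ℝ) ≤ (N:ℝ) := by exact_mod_cast hN
  have hNpos : (0:ℝ) < (N:ℝ) := by linarith
  have hC : 0 < ((N : ℝ) - 1) / (N * B ^ p) * (1 - Real.exp (-β)) * Real.exp (-2 * N * β) :=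
    mul_pos (mul_pos (div_pos (by linarith) (mul_pos hNpos hBp)) hden) (Real.exp_pos _)
  refine ⟨?_, hC⟩
  apply le_csInf
  · exact ⟨_, 0, 0, le_refl 0, rfl⟩
  rintro r ⟨k, ℓ, hkl, rfl⟩
  have hfpos : ∀ j : ℤ, 0 < Real.exp (-β * |(j : ℝ)|) := fun j => Real.exp_pos _
  have hwpos : ∀ j : ℤ, 0 < w j := by
    intro j
    have h1 := (hw j).1
    have h2 : 0 < A ^ p * ∑ i ∈ Finset.Icc (j - (N:ℤ) + 1) j, Real.exp (-β * |(i : ℝ)|) := by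
      apply mul_pos (Real.rpow_pos_of_pos hA p)
      exact Finset.sum_pos (fun i _ => hfpos i) (Finset.nonempty_Icc.mpr (by omega))
    linarith
  set D : ℝ := B ^ p * ((N : ℝ) * Real.exp (β * ((N:ℝ) - 1))) with hD_def
  have hD : 0 < D := by positivity
  have hwle : ∀ j : ℤ, w j ≤ D * Real.exp (-β * |(j : ℝ)|) := by
    intro j
    calc w j ≤ B ^ p * ∑ i ∈ Finset.Icc (j - (N:ℤ) + 1) j, Real.exp (-β * |(i:ℝ)|) := (hw j).2
      _ ≤ B ^ p * ((N:ℝ) * Real.exp (β * ((N:ℝ)-1)) * Real.exp (-β * |(j:ℝ)|)) :=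
          mul_le_mul_of_nonneg_left (Sj_le hβ N j) hBp.le
      _ = D * Real.exp (-β * |(j : ℝ)|) := by rw [hD_def]; ring
  have hwsum : Summable w :=
    Summable.of_nonneg_of_le (fun j => (hwpos j).le) hwle ((fsummable hβ).mul_left D)
  have hVin_pos : 0 < ∑ j ∈ Finset.Icc k ℓ, w j :=
    Finset.sum_pos (fun j _ => hwpos j) (Finset.nonempty_Icc.mpr hkl)
  have hsubsum : Summable (fun j : {j : ℤ // j ∉ Finset.Icc k ℓ} => w (j : ℤ)) :=
    hwsum.subtype _
  have hVout_pos : 0 < ∑' j : {j : ℤ // j ∉ Finset.Icc k ℓ}, w (j : ℤ) := by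
    refine Summable.tsum_pos hsubsum (fun j => (hwpos _).le)
      ⟨k - 1, by simp only [Finset.mem_Icc]; omega⟩ (hwpos _)
  have hmin_pos : 0 < min (∑ j ∈ Finset.Icc k ℓ, w j)
      (∑' j : {j : ℤ // j ∉ Finset.Icc k ℓ}, w (j : ℤ)) := lt_min hVin_pos hVout_pos
  rw [le_div_iff₀ hmin_pos]
  -- block lower bounds
  have hEL : ∀ M : ℤ, (∀ j ∈ Finset.Icc (k - (N:ℤ) + 1) (k - 1), |(j:ℝ)| ≤ (M:ℝ)) →
      ((N:ℝ) - 1) * Real.exp (-β * (M:ℝ))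
        ≤ ∑ j ∈ Finset.Icc (k - (N:ℤ) + 1) (k-1), Real.exp (-β * |(j:ℝ)|) := by
    intro M hM
    have h := blockLB hβ (k - (N:ℤ) + 1) (k-1) M hM
    have hc : (((k - 1 + 1 - (k - (N:ℤ) + 1)).toNat : ℕ) : ℝ) = (N:ℝ) - 1 := by
      have h0 : (k - 1 + 1 - (k - (N:ℤ) + 1)).toNat = N - 1 := by omega
      rw [h0, Nat.cast_sub (by omega : 1 ≤ N), Nat.cast_one]
    rwa [hc] at h
  have hER : ∀ M : ℤ, (∀ j ∈ Finset.Icc (ℓ + 1 - (N:ℤ) + 1) ℓ, |(j:ℝ)| ≤ (M:ℝ)) →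
      ((N:ℝ) - 1) * Real.exp (-β * (M:ℝ))
        ≤ ∑ j ∈ Finset.Icc (ℓ + 1 - (N:ℤ) + 1) ℓ, Real.exp (-β * |(j:ℝ)|) := by
    intro M hM
    have h := blockLB hβ (ℓ + 1 - (N:ℤ) + 1) ℓ M hM
    have hc : (((ℓ + 1 - (ℓ + 1 - (N:ℤ) + 1)).toNat : ℕ) : ℝ) = (N:ℝ) - 1 := by
      have h0 : (ℓ + 1 - (ℓ + 1 - (N:ℤ) + 1)).toNat = N - 1 := by omega
      rw [h0, Nat.cast_sub (by omega : 1 ≤ N), Nat.cast_one]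
    rwa [hc] at h
  have hELnn : 0 ≤ ∑ j ∈ Finset.Icc (k - (N:ℤ) + 1) (k-1), Real.exp (-β * |(j:ℝ)|) :=
    Finset.sum_nonneg (fun j _ => (hfpos j).le)
  have hERnn : 0 ≤ ∑ j ∈ Finset.Icc (ℓ + 1 - (N:ℤ) + 1) ℓ, Real.exp (-β * |(j:ℝ)|) :=
    Finset.sum_nonneg (fun j _ => (hfpos j).le)
  by_cases hcase : (-(N:ℤ) ≤ k ∧ k ≤ N) ∨ (-(N:ℤ) ≤ ℓ ∧ ℓ ≤ N)
  · -- middle case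
    have htot : (∑ j ∈ Finset.Icc k ℓ, w j)
        + (∑' j : {j : ℤ // j ∉ Finset.Icc k ℓ}, w (j:ℤ)) = ∑' j : ℤ, w j := by
      have h := Summable.tsum_add_tsum_compl (f := w) (s := (↑(Finset.Icc k ℓ) : Set ℤ))
        (hwsum.subtype _) (hwsum.subtype _)
      have e2 : (∑' (x : ↑(↑(Finset.Icc k ℓ) : Set ℤ)), w ↑x) = ∑ j ∈ Finset.Icc k ℓ, w j :=
        Finset.tsum_subtype _ _
      calc (∑ j ∈ Finset.Icc k ℓ, w j) + (∑' j : {j : ℤ // j ∉ Finset.Icc k ℓ}, w (j:ℤ))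
          = (∑' (x : ↑(↑(Finset.Icc k ℓ) : Set ℤ)), w ↑x)
            + (∑' (x : ↑(↑(Finset.Icc k ℓ) : Set ℤ)ᶜ), w ↑x) := by
              rw [e2]
              rfl
        _ = ∑' j : ℤ, w j := h
    have htot_le : ∑' j : ℤ, w j ≤ B ^ p * ((N:ℝ) * (2 * (1 - Real.exp (-β))⁻¹)) := by
      calc ∑' j : ℤ, w j
          ≤ ∑' j : ℤ, B ^ p * (∑ i ∈ Finset.Icc (j - (N:ℤ) + 1) j, Real.exp (-β * |(i:ℝ)|)) :=
            Summable.tsum_le_tsum (fun j => (hw j).2) hwsum ((Ssummable hβ N).1.mul_left _)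
        _ = B ^ p * ∑' j : ℤ, (∑ i ∈ Finset.Icc (j - (N:ℤ) + 1) j, Real.exp (-β * |(i:ℝ)|)) :=
            tsum_mul_left
        _ ≤ _ := mul_le_mul_of_nonneg_left (Ssummable hβ N).2 hBp.le
    have hminle : min (∑ j ∈ Finset.Icc k ℓ, w j)
        (∑' j : {j : ℤ // j ∉ Finset.Icc k ℓ}, w (j:ℤ))
        ≤ B ^ p * (N:ℝ) * (1 - Real.exp (-β))⁻¹ := by
      have h1 := min_le_left (∑ j ∈ Finset.Icc k ℓ, w j)
        (∑' j : {j : ℤ // j ∉ Finset.Icc k ℓ}, w (j:ℤ))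
      have h2 := min_le_right (∑ j ∈ Finset.Icc k ℓ, w j)
        (∑' j : {j : ℤ // j ∉ Finset.Icc k ℓ}, w (j:ℤ))
      nlinarith
    have hkey : ((N : ℝ) - 1) / (N * B ^ p) * (1 - Real.exp (-β)) * Real.exp (-2 * N * β)
        * (B ^ p * (N:ℝ) * (1 - Real.exp (-β))⁻¹)
        = ((N:ℝ)-1) * Real.exp (-2*N*β) :=
      key_alg0 hNpos.ne' hBp.ne' hden.ne'
    have hE : ((N:ℝ)-1) * Real.exp (-2*(N:ℝ)*β)
        ≤ (∑ j ∈ Finset.Icc (k - (N:ℤ) + 1) (k-1), Real.exp (-β * |(j:ℝ)|))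
          + ∑ j ∈ Finset.Icc (ℓ + 1 - (N:ℤ) + 1) ℓ, Real.exp (-β * |(j:ℝ)|) := by
      have hexp : Real.exp (-β * ((2*(N:ℤ) : ℤ):ℝ)) = Real.exp (-2*(N:ℝ)*β) := by
        congr 1
        push_cast
        ring
      rcases hcase with h | h
      · have hb := hEL (2*(N:ℤ)) (fun j hj => by
          rw [Finset.mem_Icc] at hj
          rw [abs_le]
          constructor
          · exact_mod_cast (by omega : -(2*(N:ℤ)) ≤ j)
          · exact_mod_cast (by omega : j ≤ 2*(N:ℤ)))
        rw [hexp] at hb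
        linarith
      · have hb := hER (2*(N:ℤ)) (fun j hj => by
          rw [Finset.mem_Icc] at hj
          rw [abs_le]
          constructor
          · exact_mod_cast (by omega : -(2*(N:ℤ)) ≤ j)
          · exact_mod_cast (by omega : j ≤ 2*(N:ℤ)))
        rw [hexp] at hb
        linarith
    calc ((N : ℝ) - 1) / (N * B ^ p) * (1 - Real.exp (-β)) * Real.exp (-2 * N * β)
          * min (∑ j ∈ Finset.Icc k ℓ, w j) (∑' j : {j : ℤ // j ∉ Finset.Icc k ℓ}, w (j:ℤ))
        ≤ ((N : ℝ) - 1) / (N * B ^ p) * (1 - Real.exp (-β)) * Real.exp (-2 * N * β)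
          * (B ^ p * (N:ℝ) * (1 - Real.exp (-β))⁻¹) :=
          mul_le_mul_of_nonneg_left hminle hC.le
      _ = ((N:ℝ)-1) * Real.exp (-2*(N:ℝ)*β) := hkey
      _ ≤ _ := hE
  · rcases (by omega : ((N:ℤ) < k) ∨ (k < -(N:ℤ) ∧ (N:ℤ) < ℓ) ∨ ℓ < -(N:ℤ)) with hA' | hC' | hB'
    · -- right case : use Vin
      have hVin_le : ∑ j ∈ Finset.Icc k ℓ, w j
          ≤ D * (Real.exp (-β * (k:ℝ)) * (1 - Real.exp (-β))⁻¹) := by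
        calc ∑ j ∈ Finset.Icc k ℓ, w j
            ≤ ∑ j ∈ Finset.Icc k ℓ, D * Real.exp (-β * |(j:ℝ)|) :=
              Finset.sum_le_sum (fun j _ => hwle j)
          _ = D * ∑ j ∈ Finset.Icc k ℓ, Real.exp (-β * |(j:ℝ)|) := by rw [← Finset.mul_sum]
          _ ≤ _ := mul_le_mul_of_nonneg_left (G1 hβ (by omega) ℓ) hD.le
      have hkey : ((N : ℝ) - 1) / (N * B ^ p) * (1 - Real.exp (-β)) * Real.exp (-2 * N * β)
          * (D * (Real.exp (-β * (k:ℝ)) * (1 - Real.exp (-β))⁻¹))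
          = ((N:ℝ)-1) * (Real.exp (-2*(N:ℝ)*β) * Real.exp (β*((N:ℝ)-1)) * Real.exp (-β*(k:ℝ))) := by
        rw [hD_def]
        exact key_alg1 hNpos.ne' hBp.ne' hden.ne'
      have hcomp : ((N:ℝ)-1) * (Real.exp (-2*(N:ℝ)*β) * Real.exp (β*((N:ℝ)-1)) * Real.exp (-β*(k:ℝ)))
          ≤ ((N:ℝ)-1) * Real.exp (-β * ((k - 1 : ℤ):ℝ)) := by
        apply mul_le_mul_of_nonneg_left _ (by linarith)
        rw [← Real.exp_add, ← Real.exp_add]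
        apply Real.exp_le_exp.mpr
        push_cast
        nlinarith [mul_pos hβ hNpos]
      have hb := hEL (k - 1) (fun j hj => by
        rw [Finset.mem_Icc] at hj
        rw [abs_le]
        constructor
        · exact_mod_cast (by omega : -(k-1) ≤ j)
        · exact_mod_cast (by omega : j ≤ k - 1))
      calc ((N : ℝ) - 1) / (N * B ^ p) * (1 - Real.exp (-β)) * Real.exp (-2 * N * β)
            * min (∑ j ∈ Finset.Icc k ℓ, w j) (∑' j : {j : ℤ // j ∉ Finset.Icc k ℓ}, w (j:ℤ))
          ≤ ((N : ℝ) - 1) / (N * B ^ p) * (1 - Real.exp (-β)) * Real.exp (-2 * N * β)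
            * (D * (Real.exp (-β * (k:ℝ)) * (1 - Real.exp (-β))⁻¹)) :=
            mul_le_mul_of_nonneg_left (le_trans (min_le_left _ _) hVin_le) hC.le
        _ = ((N:ℝ)-1) * (Real.exp (-2*(N:ℝ)*β) * Real.exp (β*((N:ℝ)-1)) * Real.exp (-β*(k:ℝ))) := hkey
        _ ≤ ((N:ℝ)-1) * Real.exp (-β * ((k - 1 : ℤ):ℝ)) := hcomp
        _ ≤ _ := by linarith
    · -- straddling case : use Vout
      have hVout_le : (∑' j : {j : ℤ // j ∉ Finset.Icc k ℓ}, w (j:ℤ))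
          ≤ D * (Real.exp (β * ((k - 1 : ℤ):ℝ)) * (1 - Real.exp (-β))⁻¹
               + Real.exp (-β * ((ℓ + 1 : ℤ):ℝ)) * (1 - Real.exp (-β))⁻¹) := by
        have e1 : (∑' j : {j : ℤ // j ∉ Finset.Icc k ℓ}, w (j:ℤ))
            = ∑' j : ℤ, Set.indicator {i : ℤ | i ∉ Finset.Icc k ℓ} w j :=
          tsum_subtype {i : ℤ | i ∉ Finset.Icc k ℓ} w
        have hsum1 : Summable (Set.indicator {i : ℤ | i ≤ k - 1}
            (fun i : ℤ => Real.exp (-β * |(i:ℝ)|))) := (fsummable hβ).indicator _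
        have hsum2 : Summable (Set.indicator {i : ℤ | ℓ + 1 ≤ i}
            (fun i : ℤ => Real.exp (-β * |(i:ℝ)|))) := (fsummable hβ).indicator _
        have hpt : ∀ j : ℤ, Set.indicator {i : ℤ | i ∉ Finset.Icc k ℓ} w j
            ≤ D * (Set.indicator {i : ℤ | i ≤ k - 1} (fun i : ℤ => Real.exp (-β * |(i:ℝ)|)) j
                 + Set.indicator {i : ℤ | ℓ + 1 ≤ i} (fun i : ℤ => Real.exp (-β * |(i:ℝ)|)) j) := by
          intro j
          have hind1 : 0 ≤ Set.indicator {i : ℤ | i ≤ k - 1}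
              (fun i : ℤ => Real.exp (-β * |(i:ℝ)|)) j :=
            Set.indicator_nonneg (fun i _ => (hfpos i).le) j
          have hind2 : 0 ≤ Set.indicator {i : ℤ | ℓ + 1 ≤ i}
              (fun i : ℤ => Real.exp (-β * |(i:ℝ)|)) j :=
            Set.indicator_nonneg (fun i _ => (hfpos i).le) j
          by_cases hj : j ∈ {i : ℤ | i ∉ Finset.Icc k ℓ}
          · rw [Set.indicator_of_mem hj]
            have hj' : j ∉ Finset.Icc k ℓ := hj
            rw [Finset.mem_Icc] at hj'
            rcases (by omega : j ≤ k - 1 ∨ ℓ + 1 ≤ j) with h | h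
            · rw [Set.indicator_of_mem (by exact h : j ∈ {i : ℤ | i ≤ k - 1})]
              have h2 := hwle j
              nlinarith
            · rw [Set.indicator_of_mem (by exact h : j ∈ {i : ℤ | ℓ + 1 ≤ i})]
              have h2 := hwle j
              nlinarith
          · rw [Set.indicator_of_notMem hj]
            have := mul_nonneg hD.le (add_nonneg hind1 hind2)
            linarith
        rw [e1]
        calc ∑' j : ℤ, Set.indicator {i : ℤ | i ∉ Finset.Icc k ℓ} w j
            ≤ ∑' j : ℤ, D * (Set.indicator {i : ℤ | i ≤ k - 1}
                  (fun i : ℤ => Real.exp (-β * |(i:ℝ)|)) j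
                + Set.indicator {i : ℤ | ℓ + 1 ≤ i}
                  (fun i : ℤ => Real.exp (-β * |(i:ℝ)|)) j) :=
              Summable.tsum_le_tsum hpt (hwsum.indicator _) ((hsum1.add hsum2).mul_left D)
          _ = D * ((∑' j : ℤ, Set.indicator {i : ℤ | i ≤ k - 1}
                  (fun i : ℤ => Real.exp (-β * |(i:ℝ)|)) j)
                + ∑' j : ℤ, Set.indicator {i : ℤ | ℓ + 1 ≤ i}
                  (fun i : ℤ => Real.exp (-β * |(i:ℝ)|)) j) := by
              rw [tsum_mul_left, Summable.tsum_add hsum1 hsum2]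
          _ ≤ D * (Real.exp (β * ((k - 1 : ℤ):ℝ)) * (1 - Real.exp (-β))⁻¹
               + Real.exp (-β * ((ℓ + 1 : ℤ):ℝ)) * (1 - Real.exp (-β))⁻¹) := by
              apply mul_le_mul_of_nonneg_left _ hD.le
              apply add_le_add
              · exact le_trans (le_of_eq (tsum_subtype {i : ℤ | i ≤ k - 1}
                  (fun i : ℤ => Real.exp (-β * |(i:ℝ)|))).symm) (TL hβ (by omega))
              · exact le_trans (le_of_eq (tsum_subtype {i : ℤ | ℓ + 1 ≤ i}
                  (fun i : ℤ => Real.exp (-β * |(i:ℝ)|))).symm) (TR hβ (by omega))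
      have hkey : ((N : ℝ) - 1) / (N * B ^ p) * (1 - Real.exp (-β)) * Real.exp (-2 * N * β)
          * (D * (Real.exp (β * ((k - 1 : ℤ):ℝ)) * (1 - Real.exp (-β))⁻¹
               + Real.exp (-β * ((ℓ + 1 : ℤ):ℝ)) * (1 - Real.exp (-β))⁻¹))
          = ((N:ℝ)-1) * (Real.exp (-2*(N:ℝ)*β) * Real.exp (β*((N:ℝ)-1))
              * Real.exp (β * ((k - 1 : ℤ):ℝ)))
            + ((N:ℝ)-1) * (Real.exp (-2*(N:ℝ)*β) * Real.exp (β*((N:ℝ)-1))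
              * Real.exp (-β * ((ℓ + 1 : ℤ):ℝ))) := by
        rw [hD_def]
        exact key_alg2 hNpos.ne' hBp.ne' hden.ne'
      have hcomp1 : ((N:ℝ)-1) * (Real.exp (-2*(N:ℝ)*β) * Real.exp (β*((N:ℝ)-1))
            * Real.exp (β * ((k - 1 : ℤ):ℝ)))
          ≤ ((N:ℝ)-1) * Real.exp (-β * (((N:ℤ) - 1 - k : ℤ):ℝ)) := by
        apply mul_le_mul_of_nonneg_left _ (by linarith)
        rw [← Real.exp_add, ← Real.exp_add]
        apply Real.exp_le_exp.mpr
        push_cast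
        nlinarith [mul_pos hβ hNpos]
      have hcomp2 : ((N:ℝ)-1) * (Real.exp (-2*(N:ℝ)*β) * Real.exp (β*((N:ℝ)-1))
            * Real.exp (-β * ((ℓ + 1 : ℤ):ℝ)))
          ≤ ((N:ℝ)-1) * Real.exp (-β * ((ℓ : ℤ):ℝ)) := by
        apply mul_le_mul_of_nonneg_left _ (by linarith)
        rw [← Real.exp_add, ← Real.exp_add]
        apply Real.exp_le_exp.mpr
        push_cast
        nlinarith [mul_pos hβ hNpos]
      have hb1 := hEL ((N:ℤ) - 1 - k) (fun j hj => by
        rw [Finset.mem_Icc] at hj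
        rw [abs_le]
        constructor
        · exact_mod_cast (by omega : -((N:ℤ) - 1 - k) ≤ j)
        · exact_mod_cast (by omega : j ≤ (N:ℤ) - 1 - k))
      have hb2 := hER ℓ (fun j hj => by
        rw [Finset.mem_Icc] at hj
        rw [abs_le]
        constructor
        · exact_mod_cast (by omega : -ℓ ≤ j)
        · exact_mod_cast (by omega : j ≤ ℓ))
      calc ((N : ℝ) - 1) / (N * B ^ p) * (1 - Real.exp (-β)) * Real.exp (-2 * N * β)
            * min (∑ j ∈ Finset.Icc k ℓ, w j) (∑' j : {j : ℤ // j ∉ Finset.Icc k ℓ}, w (j:ℤ))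
          ≤ ((N : ℝ) - 1) / (N * B ^ p) * (1 - Real.exp (-β)) * Real.exp (-2 * N * β)
            * (D * (Real.exp (β * ((k - 1 : ℤ):ℝ)) * (1 - Real.exp (-β))⁻¹
               + Real.exp (-β * ((ℓ + 1 : ℤ):ℝ)) * (1 - Real.exp (-β))⁻¹)) :=
            mul_le_mul_of_nonneg_left (le_trans (min_le_right _ _) hVout_le) hC.le
        _ = _ := hkey
        _ ≤ ((N:ℝ)-1) * Real.exp (-β * (((N:ℤ) - 1 - k : ℤ):ℝ))
            + ((N:ℝ)-1) * Real.exp (-β * ((ℓ : ℤ):ℝ)) := add_le_add hcomp1 hcomp2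
        _ ≤ _ := add_le_add hb1 hb2
    · -- left case : use Vin with G2
      have hVin_le : ∑ j ∈ Finset.Icc k ℓ, w j
          ≤ D * (Real.exp (β * (ℓ:ℝ)) * (1 - Real.exp (-β))⁻¹) := by
        calc ∑ j ∈ Finset.Icc k ℓ, w j
            ≤ ∑ j ∈ Finset.Icc k ℓ, D * Real.exp (-β * |(j:ℝ)|) :=
              Finset.sum_le_sum (fun j _ => hwle j)
          _ = D * ∑ j ∈ Finset.Icc k ℓ, Real.exp (-β * |(j:ℝ)|) := by rw [← Finset.mul_sum]
          _ ≤ _ := mul_le_mul_of_nonneg_left (G2 hβ (by omega) k) hD.le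
      have hkey : ((N : ℝ) - 1) / (N * B ^ p) * (1 - Real.exp (-β)) * Real.exp (-2 * N * β)
          * (D * (Real.exp (β * (ℓ:ℝ)) * (1 - Real.exp (-β))⁻¹))
          = ((N:ℝ)-1) * (Real.exp (-2*(N:ℝ)*β) * Real.exp (β*((N:ℝ)-1)) * Real.exp (β*(ℓ:ℝ))) := by
        rw [hD_def]
        exact key_alg1 hNpos.ne' hBp.ne' hden.ne'
      have hcomp : ((N:ℝ)-1) * (Real.exp (-2*(N:ℝ)*β) * Real.exp (β*((N:ℝ)-1)) * Real.exp (β*(ℓ:ℝ)))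
          ≤ ((N:ℝ)-1) * Real.exp (-β * (((N:ℤ) - 2 - ℓ : ℤ):ℝ)) := by
        apply mul_le_mul_of_nonneg_left _ (by linarith)
        rw [← Real.exp_add, ← Real.exp_add]
        apply Real.exp_le_exp.mpr
        push_cast
        nlinarith [mul_pos hβ hNpos]
      have hb := hER ((N:ℤ) - 2 - ℓ) (fun j hj => by
        rw [Finset.mem_Icc] at hj
        rw [abs_le]
        constructor
        · exact_mod_cast (by omega : -((N:ℤ) - 2 - ℓ) ≤ j)
        · exact_mod_cast (by omega : j ≤ (N:ℤ) - 2 - ℓ))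
      calc ((N : ℝ) - 1) / (N * B ^ p) * (1 - Real.exp (-β)) * Real.exp (-2 * N * β)
            * min (∑ j ∈ Finset.Icc k ℓ, w j) (∑' j : {j : ℤ // j ∉ Finset.Icc k ℓ}, w (j:ℤ))
          ≤ ((N : ℝ) - 1) / (N * B ^ p) * (1 - Real.exp (-β)) * Real.exp (-2 * N * β)
            * (D * (Real.exp (β * (ℓ:ℝ)) * (1 - Real.exp (-β))⁻¹)) :=
            mul_le_mul_of_nonneg_left (le_trans (min_le_left _ _) hVin_le) hC.le
        _ = ((N:ℝ)-1) * (Real.exp (-2*(N:ℝ)*β) * Real.exp (β*((N:ℝ)-1)) * Real.exp (β*(ℓ:ℝ))) := hkey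
        _ ≤ ((N:ℝ)-1) * Real.exp (-β * (((N:ℤ) - 2 - ℓ : ℤ):ℝ)) := hcomp
        _ ≤ _ := by linarith
end

section
/- Let G_f = (V_f, E_f, w) be a weighted graph associated to f under an LSCC measurement scheme: for each vertex v, Φ_v is a phase retrieval frame for the subspace B_v with projection P_v satisfying φ∘P_v = φ for φ ∈ Φ_v, and for each edge (u,v), ‖Ψ_{u,v}(h)‖_p ≤ C₁‖Φ_v(h)‖_p and ‖Ψ_{u,v}(h)‖_p ≤ C₁‖Φ_u(h)‖_p for all h; vertex weights are w_v = ‖Φ_v(f)‖_p^p and edge weights w_{uv} = ‖Ψ_{u,v}(f)‖_p^p, with V_f = {v : w_v > 0} and E_f = {(u,v) : w_{uv} > 0}; and Φ = ∪_v Φ_v is a frame (injective). If G_f is connected, then f is phase retrievable: any g with |Φ(g)| = |Φ(f)| satisfies g = ξ f for some unimodular scalar ξ. -/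
open scoped BigOperators

/-- Phase retrievability from connectivity for an LSCC measurement scheme.  Given local
subspaces `Bv v` with projections `P v` satisfying `φ ∘ P v = φ` for `φ ∈ Φ v`, local phase
retrieval frames `Φ v`, edge functionals `Ψ (u,v)` dominated by `C₁` times the local frame
norms, and a globally injective family `Φ`: if the weighted graph `G_f` induced by `f`
(vertices with `‖Φ_v(f)‖_p > 0`, edges with `‖Ψ_{u,v}(f)‖_p > 0`) is connected, then any
`g` with `|Φ(g)| = |Φ(f)|` satisfies `g = ξ • f` for a unimodular scalar `ξ`. -/
theorem stmt12 {𝕜 B V : Type*} [RCLike 𝕜] [NormedAddCommGroup B] [NormedSpace 𝕜 B]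
    (E : Set (V × V))
    (Bv : V → Submodule 𝕜 B) (P : V → B →L[𝕜] B)
    (Φ : V → Finset (B →L[𝕜] 𝕜)) (Ψ : V × V → Finset (B →L[𝕜] 𝕜))
    (p C₁ : ℝ) (hp : 1 ≤ p) (hC₁ : 0 < C₁)
    (hPmem : ∀ v : V, ∀ h : B, P v h ∈ Bv v)
    (hPproj : ∀ v : V, ∀ φ ∈ Φ v, ∀ h : B, φ (P v h) = φ h)
    (hlocalPR : ∀ v : V, ∀ h h' : B, h ∈ Bv v → h' ∈ Bv v →
      (∀ φ ∈ Φ v, ‖φ h'‖ = ‖φ h‖) → ∃ ξ : 𝕜, ‖ξ‖ = 1 ∧ h' = ξ • h)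
    (hΨ : ∀ e ∈ E, ∀ h : B,
      (∑ ψ ∈ Ψ e, ‖ψ h‖ ^ p) ≤ C₁ ^ p * ∑ φ ∈ Φ e.1, ‖φ h‖ ^ p ∧
      (∑ ψ ∈ Ψ e, ‖ψ h‖ ^ p) ≤ C₁ ^ p * ∑ φ ∈ Φ e.2, ‖φ h‖ ^ p)
    (hinj : ∀ h h' : B, (∀ v : V, ∀ φ ∈ Φ v, φ h = φ h') → h = h')
    (f : B)
    (hconn : ∀ u v : V, 0 < (∑ φ ∈ Φ u, ‖φ f‖ ^ p) → 0 < (∑ φ ∈ Φ v, ‖φ f‖ ^ p) →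
      Relation.ReflTransGen (fun a b : V =>
        ((a, b) ∈ E ∧ 0 < ∑ ψ ∈ Ψ (a, b), ‖ψ f‖ ^ p) ∨
        ((b, a) ∈ E ∧ 0 < ∑ ψ ∈ Ψ (b, a), ‖ψ f‖ ^ p)) u v)
    (g : B) (hg : ∀ v : V, ∀ φ ∈ Φ v, ‖φ g‖ = ‖φ f‖) :
    ∃ ξ : 𝕜, ‖ξ‖ = 1 ∧ g = ξ • f := by

  have hp0 : p ≠ 0 := by linarith
  -- choose a local phase for each vertex
  have hξ : ∀ v : V, ∃ ξ : 𝕜, ‖ξ‖ = 1 ∧ ∀ φ ∈ Φ v, φ g = ξ * φ f := by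
    intro v
    obtain ⟨ξ, hξ1, hξ2⟩ := hlocalPR v (P v f) (P v g) (hPmem v f) (hPmem v g)
      (fun φ hφ => by rw [hPproj v φ hφ f, hPproj v φ hφ g, hg v φ hφ])
    refine ⟨ξ, hξ1, fun φ hφ => ?_⟩
    have := congrArg φ hξ2
    rw [map_smul, hPproj v φ hφ f, hPproj v φ hφ g] at this
    simpa using this
  choose ξ hξ1 hξ2 using hξ
  -- vanishing at zero-weight vertices
  have hzero : ∀ v : V, ¬ 0 < (∑ φ ∈ Φ v, ‖φ f‖ ^ p) → ∀ φ ∈ Φ v, φ f = 0 := by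
    intro v hv φ hφ
    have hnn : ∀ φ ∈ Φ v, 0 ≤ ‖φ f‖ ^ p := fun φ _ => Real.rpow_nonneg (norm_nonneg _) p
    have hsum0 : (∑ φ ∈ Φ v, ‖φ f‖ ^ p) = 0 :=
      le_antisymm (not_lt.mp hv) (Finset.sum_nonneg hnn)
    have := (Finset.sum_eq_zero_iff_of_nonneg hnn).mp hsum0 φ hφ
    have := (Real.rpow_eq_zero (norm_nonneg _) hp0).mp this
    exact norm_eq_zero.mp this
  -- edge lemma: positive edge weight forces equal phases
  have hedge : ∀ e ∈ E, 0 < (∑ ψ ∈ Ψ e, ‖ψ f‖ ^ p) → ξ e.1 = ξ e.2 := by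
    intro e he hw
    have key : ∀ a : V, (∀ φ ∈ Φ a, φ g = ξ a * φ f) →
        ((∑ ψ ∈ Ψ e, ‖ψ (g - ξ a • f)‖ ^ p) ≤ C₁ ^ p * ∑ φ ∈ Φ a, ‖φ (g - ξ a • f)‖ ^ p) →
        ∀ ψ ∈ Ψ e, ψ g = ξ a * ψ f := by
      intro a ha hle ψ hψ
      have hz : (∑ φ ∈ Φ a, ‖φ (g - ξ a • f)‖ ^ p) = 0 := by
        apply Finset.sum_eq_zero
        intro φ hφ
        have : φ (g - ξ a • f) = 0 := by
          rw [map_sub, map_smul, ha φ hφ]; simp [smul_eq_mul]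
        rw [this, norm_zero, Real.zero_rpow hp0]
      rw [hz, mul_zero] at hle
      have hnn : ∀ ψ' ∈ Ψ e, 0 ≤ ‖ψ' (g - ξ a • f)‖ ^ p :=
        fun ψ' _ => Real.rpow_nonneg (norm_nonneg _) p
      have hsum0 := le_antisymm hle (Finset.sum_nonneg hnn)
      have := (Finset.sum_eq_zero_iff_of_nonneg hnn).mp hsum0 ψ hψ
      have := norm_eq_zero.mp ((Real.rpow_eq_zero (norm_nonneg _) hp0).mp this)
      rw [map_sub, map_smul, sub_eq_zero] at this
      simpa [smul_eq_mul] using this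
    obtain ⟨ψ, hψmem, hψpos⟩ : ∃ ψ ∈ Ψ e, 0 < ‖ψ f‖ ^ p := by
      by_contra hcon
      push_neg at hcon
      have : (∑ ψ ∈ Ψ e, ‖ψ f‖ ^ p) ≤ 0 := Finset.sum_nonpos hcon
      linarith
    have hψf : ψ f ≠ 0 := by
      intro h0
      rw [h0, norm_zero, Real.zero_rpow hp0] at hψpos
      exact lt_irrefl _ hψpos
    have h1 := key e.1 (hξ2 e.1) (hΨ e he (g - ξ e.1 • f)).1 ψ hψmem
    have h2 := key e.2 (hξ2 e.2) (hΨ e he (g - ξ e.2 • f)).2 ψ hψmem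
    exact mul_right_cancel₀ hψf (h1.symm.trans h2)
  by_cases hex : ∃ u : V, 0 < (∑ φ ∈ Φ u, ‖φ f‖ ^ p)
  · obtain ⟨u₀, hu₀⟩ := hex
    refine ⟨ξ u₀, hξ1 u₀, hinj g (ξ u₀ • f) ?_⟩
    intro v φ hφ
    rw [map_smul, smul_eq_mul]
    by_cases hv : 0 < (∑ φ ∈ Φ v, ‖φ f‖ ^ p)
    · have hpath := hconn u₀ v hu₀ hv
      have hξeq : ξ u₀ = ξ v := by
        clear hφ hv
        induction hpath with
        | refl => rfl
        | tail hab hstep ih =>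
          rcases hstep with ⟨hE, hpos⟩ | ⟨hE, hpos⟩
          · exact ih.trans (hedge _ hE hpos)
          · exact ih.trans (hedge _ hE hpos).symm
      rw [hξ2 v φ hφ, hξeq]
    · rw [hzero v hv φ hφ, mul_zero]
      have := hg v φ hφ
      rw [hzero v hv φ hφ, norm_zero] at this
      exact norm_eq_zero.mp this
  · push_neg at hex
    refine ⟨1, norm_one, hinj g ((1:𝕜) • f) ?_⟩
    intro v φ hφ
    rw [one_smul]
    have hf0 := hzero v (not_lt.mpr (hex v)) φ hφ
    have := hg v φ hφ
    rw [hf0, norm_zero] at this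
    rw [hf0, norm_eq_zero.mp this]
end

section
/- Under the LSCC assumptions, let f, g ∈ B, let (u,v) be an edge of G_f, and let ξ_u, ξ_v be unimodular constants minimizing ξ ↦ ‖Φ_u(f) − ξΦ_u(g)‖_p and ξ ↦ ‖Φ_v(f) − ξΦ_v(g)‖_p respectively. Then |ξ_u − ξ_v|^p · ‖Ψ_{u,v}(f)‖_p^p ≤ 2^{p−1} C₀^p C₁^p ( ‖|Φ_v(f)| − |Φ_v(g)|‖_p^p + ‖|Φ_u(f)| − |Φ_u(g)|‖_p^p ). -/
open scoped BigOperators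

/-- Real version of the two-term power mean inequality:
`(a+b)^p ≤ 2^(p-1) (a^p + b^p)` for nonnegative reals and `p ≥ 1`. -/
lemma aux_add_rpow_le {a b p : ℝ} (ha : 0 ≤ a) (hb : 0 ≤ b) (hp : 1 ≤ p) :
    (a + b) ^ p ≤ 2 ^ (p - 1) * (a ^ p + b ^ p) := by
  lift a to NNReal using ha
  lift b to NNReal using hb
  have := NNReal.rpow_add_le_mul_rpow_add_rpow a b hp
  exact_mod_cast this

/-- Key lemma for LSCC schemes: if `ξ_u, ξ_v` are unimodular minimizers of
`ξ ↦ ‖Φ_u(f) - ξΦ_u(g)‖_p` and `ξ ↦ ‖Φ_v(f) - ξΦ_v(g)‖_p` respectively, then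
`|ξ_u - ξ_v|^p ‖Ψ_{u,v}(f)‖_p^p
   ≤ 2^{p-1} C₀^p C₁^p (‖|Φ_v(f)| - |Φ_v(g)|‖_p^p + ‖|Φ_u(f)| - |Φ_u(g)|‖_p^p)`. -/
theorem stmt13 {𝕜 B V : Type*} [RCLike 𝕜] [NormedAddCommGroup B] [NormedSpace 𝕜 B]
    (E : Set (V × V))
    (Φ : V → Finset (B →L[𝕜] 𝕜)) (Ψ : V × V → Finset (B →L[𝕜] 𝕜))
    (p C₀ C₁ : ℝ) (hp : 1 ≤ p) (hC₀ : 0 < C₀) (hC₁ : 0 < C₁)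
    (hstab : ∀ v : V, ∀ h h' : B, ∃ ξ : 𝕜, ‖ξ‖ = 1 ∧
      (∑ φ ∈ Φ v, ‖φ h - ξ * φ h'‖ ^ p) ≤ C₀ ^ p * ∑ φ ∈ Φ v, |‖φ h‖ - ‖φ h'‖| ^ p)
    (hΨ : ∀ e ∈ E, ∀ h : B,
      (∑ ψ ∈ Ψ e, ‖ψ h‖ ^ p) ≤ C₁ ^ p * ∑ φ ∈ Φ e.1, ‖φ h‖ ^ p ∧
      (∑ ψ ∈ Ψ e, ‖ψ h‖ ^ p) ≤ C₁ ^ p * ∑ φ ∈ Φ e.2, ‖φ h‖ ^ p)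
    (f g : B) (u v : V) (he : (u, v) ∈ E)
    (ξu ξv : 𝕜) (hξu : ‖ξu‖ = 1) (hξv : ‖ξv‖ = 1)
    (hmin_u : ∀ ξ : 𝕜, ‖ξ‖ = 1 →
      (∑ φ ∈ Φ u, ‖φ f - ξu * φ g‖ ^ p) ≤ ∑ φ ∈ Φ u, ‖φ f - ξ * φ g‖ ^ p)
    (hmin_v : ∀ ξ : 𝕜, ‖ξ‖ = 1 →
      (∑ φ ∈ Φ v, ‖φ f - ξv * φ g‖ ^ p) ≤ ∑ φ ∈ Φ v, ‖φ f - ξ * φ g‖ ^ p) :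
    ‖ξu - ξv‖ ^ p * ∑ ψ ∈ Ψ (u, v), ‖ψ f‖ ^ p ≤
      2 ^ (p - 1) * C₀ ^ p * C₁ ^ p *
        ((∑ φ ∈ Φ v, |‖φ f‖ - ‖φ g‖| ^ p) + ∑ φ ∈ Φ u, |‖φ f‖ - ‖φ g‖| ^ p) := by
  have hp0 : 0 < p := lt_of_lt_of_le one_pos hp
  -- rewrite applications at f - ξ • g
  have key : ∀ (ξ : 𝕜) (T : B →L[𝕜] 𝕜), T (f - ξ • g) = T f - ξ * T g := by
    intro ξ T
    simp [map_sub, map_smul, smul_eq_mul]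
  -- minimality + stability for u
  have hu : (∑ φ ∈ Φ u, ‖φ f - ξu * φ g‖ ^ p) ≤ C₀ ^ p * ∑ φ ∈ Φ u, |‖φ f‖ - ‖φ g‖| ^ p := by
    obtain ⟨ξ, hξ1, hξ2⟩ := hstab u f g
    exact (hmin_u ξ hξ1).trans hξ2
  have hv : (∑ φ ∈ Φ v, ‖φ f - ξv * φ g‖ ^ p) ≤ C₀ ^ p * ∑ φ ∈ Φ v, |‖φ f‖ - ‖φ g‖| ^ p := by
    obtain ⟨ξ, hξ1, hξ2⟩ := hstab v f g
    exact (hmin_v ξ hξ1).trans hξ2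
  -- Ψ bounds for h = f - ξu • g (via Φ u) and h = f - ξv • g (via Φ v)
  have hΨu : (∑ ψ ∈ Ψ (u, v), ‖ψ f - ξu * ψ g‖ ^ p)
      ≤ C₁ ^ p * ∑ φ ∈ Φ u, ‖φ f - ξu * φ g‖ ^ p := by
    have := (hΨ (u, v) he (f - ξu • g)).1
    simpa only [key] using this
  have hΨv : (∑ ψ ∈ Ψ (u, v), ‖ψ f - ξv * ψ g‖ ^ p)
      ≤ C₁ ^ p * ∑ φ ∈ Φ v, ‖φ f - ξv * φ g‖ ^ p := by
    have := (hΨ (u, v) he (f - ξv • g)).2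
    simpa only [key] using this
  -- pointwise estimate
  have point : ∀ ψ ∈ Ψ (u, v), ‖ξu - ξv‖ ^ p * ‖ψ f‖ ^ p
      ≤ 2 ^ (p - 1) * (‖ψ f - ξu * ψ g‖ ^ p + ‖ψ f - ξv * ψ g‖ ^ p) := by
    intro ψ _
    have hid : (ξv - ξu) * ψ f = ξv * (ψ f - ξu * ψ g) - ξu * (ψ f - ξv * ψ g) := by ring
    have hnorm : ‖ξu - ξv‖ * ‖ψ f‖ ≤ ‖ψ f - ξu * ψ g‖ + ‖ψ f - ξv * ψ g‖ := by
      have h1 : ‖ξu - ξv‖ * ‖ψ f‖ = ‖(ξv - ξu) * ψ f‖ := by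
        rw [norm_mul, ← norm_neg (ξv - ξu)]; ring_nf
      rw [h1, hid]
      calc ‖ξv * (ψ f - ξu * ψ g) - ξu * (ψ f - ξv * ψ g)‖
          ≤ ‖ξv * (ψ f - ξu * ψ g)‖ + ‖ξu * (ψ f - ξv * ψ g)‖ := norm_sub_le _ _
        _ = ‖ψ f - ξu * ψ g‖ + ‖ψ f - ξv * ψ g‖ := by
            rw [norm_mul, norm_mul, hξu, hξv, one_mul, one_mul]
    calc ‖ξu - ξv‖ ^ p * ‖ψ f‖ ^ p
        = (‖ξu - ξv‖ * ‖ψ f‖) ^ p := by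
          rw [Real.mul_rpow (norm_nonneg _) (norm_nonneg _)]
      _ ≤ (‖ψ f - ξu * ψ g‖ + ‖ψ f - ξv * ψ g‖) ^ p := by
          apply Real.rpow_le_rpow (by positivity) hnorm hp0.le
      _ ≤ 2 ^ (p - 1) * (‖ψ f - ξu * ψ g‖ ^ p + ‖ψ f - ξv * ψ g‖ ^ p) :=
          aux_add_rpow_le (norm_nonneg _) (norm_nonneg _) hp
  -- sum it up
  have hsum : ‖ξu - ξv‖ ^ p * ∑ ψ ∈ Ψ (u, v), ‖ψ f‖ ^ p
      ≤ 2 ^ (p - 1) * ((∑ ψ ∈ Ψ (u, v), ‖ψ f - ξu * ψ g‖ ^ p)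
        + ∑ ψ ∈ Ψ (u, v), ‖ψ f - ξv * ψ g‖ ^ p) := by
    rw [Finset.mul_sum, ← Finset.sum_add_distrib, Finset.mul_sum]
    exact Finset.sum_le_sum point
  have h2 : (0:ℝ) < 2 ^ (p - 1) := by positivity
  have hC1p : (0:ℝ) < C₁ ^ p := by positivity
  calc ‖ξu - ξv‖ ^ p * ∑ ψ ∈ Ψ (u, v), ‖ψ f‖ ^ p
      ≤ 2 ^ (p - 1) * ((∑ ψ ∈ Ψ (u, v), ‖ψ f - ξu * ψ g‖ ^ p)
        + ∑ ψ ∈ Ψ (u, v), ‖ψ f - ξv * ψ g‖ ^ p) := hsum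
    _ ≤ 2 ^ (p - 1) * (C₁ ^ p * (∑ φ ∈ Φ u, ‖φ f - ξu * φ g‖ ^ p)
        + C₁ ^ p * ∑ φ ∈ Φ v, ‖φ f - ξv * φ g‖ ^ p) := by
        apply mul_le_mul_of_nonneg_left _ h2.le
        exact add_le_add hΨu hΨv
    _ ≤ 2 ^ (p - 1) * (C₁ ^ p * (C₀ ^ p * ∑ φ ∈ Φ u, |‖φ f‖ - ‖φ g‖| ^ p)
        + C₁ ^ p * (C₀ ^ p * ∑ φ ∈ Φ v, |‖φ f‖ - ‖φ g‖| ^ p)) := by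
        apply mul_le_mul_of_nonneg_left _ h2.le
        exact add_le_add (mul_le_mul_of_nonneg_left hu hC1p.le)
          (mul_le_mul_of_nonneg_left hv hC1p.le)
    _ = 2 ^ (p - 1) * C₀ ^ p * C₁ ^ p *
        ((∑ φ ∈ Φ v, |‖φ f‖ - ‖φ g‖| ^ p) + ∑ φ ∈ Φ u, |‖φ f‖ - ‖φ g‖| ^ p) := by
        ring
end

section
/- In the finite local measurement model on ℂ^d with d = aL, window length 2a, and local frames Φ_ℓ with uniform frame bounds (A, B), there exist f, g in the class B_{s,t} (f = all-ones vector, g(k) = exp(2πik/d)) such that min over unimodular ξ of ‖Φ(f) − ξΦ(g)‖₂² ≥ aLA², while ‖|Φ(f)| − |Φ(g)|‖₂² ≤ aB²L(1 − cos(4πa/d)). Hence any stability constant C_{s,t}(ℂ, L) satisfying the uniform stability inequality over B_{s,t} must be at least (A/B)(1 − cos(4πa/L))^{−1/2}, which grows linearly in L. -/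
open scoped BigOperators

private lemma norm_one_sub_exp (θ : ℝ) :
    ‖(1 : ℂ) - Complex.exp ((θ : ℂ) * Complex.I)‖ ^ 2 = 2 - 2 * Real.cos θ := by
  rw [Complex.exp_mul_I, Complex.sq_norm]
  simp only [Complex.normSq_apply, Complex.sub_re, Complex.sub_im, Complex.add_re,
    Complex.add_im, Complex.mul_re, Complex.mul_im, Complex.I_re, Complex.I_im,
    Complex.one_re, Complex.one_im, Complex.cos_ofReal_re, Complex.cos_ofReal_im,
    Complex.sin_ofReal_re, Complex.sin_ofReal_im]
  nlinarith [Real.sin_sq_add_cos_sq θ]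

private lemma window_bij {a L d : ℕ} [NeZero d] (ha : 0 < a) (hd : d = a * L) :
    Function.Bijective
      (fun p : Fin L × Fin a => ((((p.1 : ℕ) * a + (p.2 : ℕ) : ℕ) : ZMod d))) := by
  rw [Fintype.bijective_iff_injective_and_card]
  constructor
  · rintro ⟨ℓ1, m1⟩ ⟨ℓ2, m2⟩ hmn
    have hv : ∀ (ℓ : Fin L) (m : Fin a), (ℓ : ℕ) * a + (m : ℕ) < d := by
      intro ℓ m
      have h1 : (ℓ : ℕ) + 1 ≤ L := ℓ.isLt
      have h3 : (m : ℕ) < a := m.isLt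
      have h4 : (ℓ : ℕ) * a + (m : ℕ) < ((ℓ : ℕ) + 1) * a := by nlinarith
      have h5 : ((ℓ : ℕ) + 1) * a ≤ d := by rw [hd]; nlinarith
      omega
    have h1 := ZMod.val_cast_of_lt (hv ℓ1 m1)
    have h2 := ZMod.val_cast_of_lt (hv ℓ2 m2)
    have heq : (ℓ1 : ℕ) * a + (m1 : ℕ) = (ℓ2 : ℕ) * a + (m2 : ℕ) := by
      have h3 := congrArg ZMod.val hmn
      simp only at h3
      rw [h1, h2] at h3
      exact h3
    have ediv : ∀ (ℓ : Fin L) (m : Fin a), ((ℓ : ℕ) * a + (m : ℕ)) / a = (ℓ : ℕ) := by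
      intro ℓ m
      rw [mul_comm, Nat.mul_add_div ha, Nat.div_eq_of_lt m.isLt, add_zero]
    have hℓ : (ℓ1 : ℕ) = (ℓ2 : ℕ) := by
      rw [← ediv ℓ1 m1, ← ediv ℓ2 m2, heq]
    have hm : (m1 : ℕ) = (m2 : ℕ) := by
      rw [hℓ] at heq
      omega
    simp only [Prod.mk.injEq, Fin.ext_iff]
    exact ⟨hℓ, hm⟩
  · simp [ZMod.card, hd, mul_comm]

private lemma sum_window {a L d : ℕ} [NeZero d] (ha : 0 < a) (hd : d = a * L)
    (F : ZMod d → ℝ) :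
    ∑ ℓ : Fin L, ∑ m : Fin a, F ((((ℓ : ℕ) * a + (m : ℕ) : ℕ) : ZMod d))
      = ∑ k : ZMod d, F k := by
  exact ((Fintype.sum_prod_type
      (f := fun p : Fin L × Fin a => F ((((p.1 : ℕ) * a + (p.2 : ℕ) : ℕ) : ZMod d)))).symm.trans
    (Fintype.sum_bijective _ (window_bij ha hd) _ F fun p => rfl))

private lemma sum_two_window {a L d : ℕ} [NeZero d] (ha : 0 < a) (hd : d = a * L)
    (F : ZMod d → ℝ) :
    ∑ ℓ : Fin L, ∑ m : Fin (2 * a), F ((((ℓ : ℕ) * a + (m : ℕ) : ℕ) : ZMod d))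
      = 2 * ∑ k : ZMod d, F k := by
  have hsplit : ∀ ℓ : Fin L,
      ∑ m : Fin (2 * a), F ((((ℓ : ℕ) * a + (m : ℕ) : ℕ) : ZMod d))
        = (∑ m : Fin a, F ((((ℓ : ℕ) * a + (m : ℕ) : ℕ) : ZMod d)))
          + ∑ m : Fin a, F (((((ℓ : ℕ) * a + (m : ℕ) : ℕ) : ZMod d)) + (a : ZMod d)) := by
    intro ℓ
    rw [Fin.sum_univ_eq_sum_range (fun i => F ((((ℓ : ℕ) * a + i : ℕ) : ZMod d))),
      Fin.sum_univ_eq_sum_range (fun i => F ((((ℓ : ℕ) * a + i : ℕ) : ZMod d))),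
      Fin.sum_univ_eq_sum_range
        (fun i => F (((((ℓ : ℕ) * a + i : ℕ) : ZMod d)) + (a : ZMod d)))]
    simp only [Finset.range_eq_Ico]
    rw [show 2 * a = a + a from two_mul a,
      ← Finset.sum_Ico_consecutive _ (Nat.zero_le a) (Nat.le_add_right a a)]
    congr 1
    rw [Finset.sum_Ico_eq_sum_range]
    have hcancel : a + a - a = a := by omega
    rw [hcancel, ← Finset.range_eq_Ico]
    refine Finset.sum_congr rfl fun m _ => ?_
    congr 1
    push_cast
    ring
  calc ∑ ℓ : Fin L, ∑ m : Fin (2 * a), F ((((ℓ : ℕ) * a + (m : ℕ) : ℕ) : ZMod d))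
      = ∑ ℓ : Fin L, ((∑ m : Fin a, F ((((ℓ : ℕ) * a + (m : ℕ) : ℕ) : ZMod d)))
          + ∑ m : Fin a, F (((((ℓ : ℕ) * a + (m : ℕ) : ℕ) : ZMod d)) + (a : ZMod d))) :=
        Finset.sum_congr rfl fun ℓ _ => hsplit ℓ
    _ = (∑ ℓ : Fin L, ∑ m : Fin a, F ((((ℓ : ℕ) * a + (m : ℕ) : ℕ) : ZMod d)))
          + ∑ ℓ : Fin L, ∑ m : Fin a,
              F (((((ℓ : ℕ) * a + (m : ℕ) : ℕ) : ZMod d)) + (a : ZMod d)) :=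
        Finset.sum_add_distrib
    _ = (∑ k : ZMod d, F k) + ∑ k : ZMod d, F (k + (a : ZMod d)) := by
        rw [sum_window ha hd F, sum_window ha hd (fun k => F (k + (a : ZMod d)))]
    _ = (∑ k : ZMod d, F k) + ∑ k : ZMod d, F k := by
        congr 1
        exact Fintype.sum_bijective _ (Equiv.addRight ((a : ZMod d))).bijective _ _ fun k => rfl
    _ = 2 * ∑ k : ZMod d, F k := by ring

private lemma zmod_sum_eq {d : ℕ} [NeZero d] (F : ZMod d → ℂ) :
    ∑ k : ZMod d, F k = ∑ n ∈ Finset.range d, F ((n : ℕ) : ZMod d) := by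
  rw [← Fin.sum_univ_eq_sum_range (fun n => F ((n : ℕ) : ZMod d))]
  refine (Fintype.sum_bijective (fun n : Fin d => ((n : ℕ) : ZMod d)) ?_ _ _ fun n => rfl).symm
  rw [Fintype.bijective_iff_injective_and_card]
  constructor
  · intro n1 n2 h
    have h1 := ZMod.val_cast_of_lt n1.isLt
    have h2 := ZMod.val_cast_of_lt n2.isLt
    have h3 := congrArg ZMod.val h
    rw [h1, h2] at h3
    exact Fin.ext h3
  · simp [ZMod.card]

private lemma exp_sum_zero {d : ℕ} [NeZero d] (hd2 : 2 ≤ d) :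
    ∑ k : ZMod d, Complex.exp (2 * Real.pi * Complex.I * (ZMod.val k : ℂ) / d) = 0 := by
  rw [zmod_sum_eq]
  have h1 : ∀ n ∈ Finset.range d,
      Complex.exp (2 * Real.pi * Complex.I * (ZMod.val ((n : ℕ) : ZMod d) : ℂ) / d)
        = Complex.exp (2 * Real.pi * Complex.I / d) ^ n := by
    intro n hn
    rw [ZMod.val_natCast, Nat.mod_eq_of_lt (Finset.mem_range.mp hn), ← Complex.exp_nat_mul]
    congr 1
    ring
  rw [Finset.sum_congr rfl h1]
  exact (Complex.isPrimitiveRoot_exp d (NeZero.ne d)).geom_sum_eq_zero (by omega)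

set_option maxHeartbeats 1600000 in
/-- Lower bound for the stability constant in the finite local measurement model on `ℂ^d`,
`d = aL`: local measurement families `Φ ℓ`, `ℓ = 0,…,L−1`, are frames with uniform bounds
`(A, B)` on windows of length `2a` starting at `ℓa`.  For `f = 𝟙` and `g(k) = exp(2πik/d)`,
both in `B_{s,t}` (when `s ≤ 1 ≤ t`), one has
`min_{|ξ|=1} ‖Φ(f) − ξΦ(g)‖₂² ≥ aLA²` while
`‖|Φ(f)| − |Φ(g)|‖₂² ≤ aB²L(1 − cos(4πa/d))`; hence any constant `C` satisfying the uniform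
stability inequality on `B_{s,t}` is at least `(A/B)(1 − cos(4πa/L))^{−1/2}`. -/
theorem stmt16 (a L d : ℕ) [NeZero d] (ha : 0 < a) (hL : 4 ≤ L) (hd : d = a * L)
    (A B s t : ℝ) (hA : 0 < A) (hAB : A ≤ B) (hs : 0 < s) (hs1 : s ≤ 1) (ht : 1 ≤ t)
    (Φ : Fin L → Finset (EuclideanSpace ℂ (ZMod d) →L[ℂ] ℂ))
    (hframe : ∀ ℓ : Fin L, ∀ h : EuclideanSpace ℂ (ZMod d),
      A ^ 2 * (∑ m : Fin (2 * a), ‖h ((((ℓ : ℕ) * a + (m : ℕ) : ℕ) : ZMod d))‖ ^ 2) ≤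
          (∑ φ ∈ Φ ℓ, ‖φ h‖ ^ 2) ∧
        (∑ φ ∈ Φ ℓ, ‖φ h‖ ^ 2) ≤
          B ^ 2 * ∑ m : Fin (2 * a), ‖h ((((ℓ : ℕ) * a + (m : ℕ) : ℕ) : ZMod d))‖ ^ 2)
    (hsupp : ∀ ℓ : Fin L, ∀ φ ∈ Φ ℓ, ∀ h : EuclideanSpace ℂ (ZMod d),
      (∀ m : Fin (2 * a), h ((((ℓ : ℕ) * a + (m : ℕ) : ℕ) : ZMod d)) = 0) → φ h = 0)
    (Bst : Set (EuclideanSpace ℂ (ZMod d)))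
    (hBst : Bst = {h : EuclideanSpace ℂ (ZMod d) | ∀ j : ZMod d,
      s ^ 2 ≤ (1 / a) * (∑ m : Fin a, ‖h (j + ((m : ℕ) : ZMod d))‖ ^ 2) ∧
      (1 / a) * (∑ m : Fin a, ‖h (j + ((m : ℕ) : ZMod d))‖ ^ 2) ≤ t ^ 2}) :
    ∃ f g : EuclideanSpace ℂ (ZMod d),
      (∀ k : ZMod d, f k = 1) ∧
      (∀ k : ZMod d, g k = Complex.exp (2 * Real.pi * Complex.I * (ZMod.val k : ℂ) / d)) ∧
      f ∈ Bst ∧ g ∈ Bst ∧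
      (∀ ξ : ℂ, ‖ξ‖ = 1 →
        (a : ℝ) * L * A ^ 2 ≤ (1 / 2) * ∑ ℓ : Fin L, ∑ φ ∈ Φ ℓ, ‖φ f - ξ * φ g‖ ^ 2) ∧
      ((1 / 2) * ∑ ℓ : Fin L, ∑ φ ∈ Φ ℓ, (‖φ f‖ - ‖φ g‖) ^ 2 ≤
        (a : ℝ) * B ^ 2 * L * (1 - Real.cos (4 * Real.pi * a / d))) ∧
      ∀ C : ℝ,
        (∀ f' ∈ Bst, ∀ g' ∈ Bst,
          (⨅ ξ : {ξ : ℂ // ‖ξ‖ = 1},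
              Real.sqrt ((1 / 2) * ∑ ℓ : Fin L, ∑ φ ∈ Φ ℓ, ‖φ f' - (ξ : ℂ) * φ g'‖ ^ 2)) ≤
            C * Real.sqrt ((1 / 2) * ∑ ℓ : Fin L, ∑ φ ∈ Φ ℓ, (‖φ f'‖ - ‖φ g'‖) ^ 2)) →
        A / B * (Real.sqrt (1 - Real.cos (4 * Real.pi * a / L)))⁻¹ ≤ C := by
  -- basic positivity facts
  have hL0 : 0 < L := by omega
  have hπ := Real.pi_pos
  have haR : (0 : ℝ) < a := by exact_mod_cast ha
  have hLR : (0 : ℝ) < L := by exact_mod_cast hL0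
  have hL4R : (4 : ℝ) ≤ L := by exact_mod_cast hL
  have hd4 : 4 ≤ d := by
    calc 4 = 1 * 4 := by norm_num
    _ ≤ a * L := Nat.mul_le_mul ha hL
    _ = d := hd.symm
  have hdR : (d : ℝ) = (a : ℝ) * L := by rw [hd]; push_cast; ring
  have hdR0 : (0 : ℝ) < d := by rw [hdR]; positivity
  have hBpos : (0 : ℝ) < B := lt_of_lt_of_le hA hAB
  -- the two distinguished vectors
  set f : EuclideanSpace ℂ (ZMod d) := WithLp.toLp 2 (fun _ : ZMod d => (1 : ℂ)) with hfdef
  set g : EuclideanSpace ℂ (ZMod d) :=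
    WithLp.toLp 2 (fun k : ZMod d => Complex.exp (2 * Real.pi * Complex.I * (ZMod.val k : ℂ) / d)) with hgdef
  have hf1 : ∀ k : ZMod d, f k = 1 := fun _ => rfl
  have hgval : ∀ k : ZMod d,
      g k = Complex.exp (2 * Real.pi * Complex.I * (ZMod.val k : ℂ) / d) := fun _ => rfl
  have hgnorm : ∀ k : ZMod d, ‖g k‖ = 1 := by
    intro k
    have harg : 2 * Real.pi * Complex.I * (ZMod.val k : ℂ) / d
        = ((2 * Real.pi * (ZMod.val k) / d : ℝ) : ℂ) * Complex.I := by push_cast; ring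
    rw [hgval k, harg, Complex.norm_exp_ofReal_mul_I]
  -- membership in B_{s,t}
  have hmem : ∀ h : EuclideanSpace ℂ (ZMod d), (∀ k, ‖h k‖ = 1) → h ∈ Bst := by
    intro h hh
    rw [hBst]
    intro j
    have hsum : (∑ m : Fin a, ‖h (j + ((m : ℕ) : ZMod d))‖ ^ 2) = (a : ℝ) := by
      simp [hh]
    rw [hsum, one_div, inv_mul_cancel₀ (ne_of_gt haR)]
    constructor
    · nlinarith
    · nlinarith
  have hfB : f ∈ Bst := hmem f (fun k => by rw [hf1 k]; exact norm_one)
  have hgB : g ∈ Bst := hmem g hgnorm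
  -- value of g at a natural number cast
  have hgcast : ∀ n : ℕ, g ((n : ZMod d))
      = Complex.exp (((2 * Real.pi * n / d : ℝ) : ℂ) * Complex.I) := by
    intro n
    rw [hgval, ZMod.val_natCast]
    have hdC : (d : ℂ) ≠ 0 := Nat.cast_ne_zero.mpr (NeZero.ne d)
    have hmod : ((n % d : ℕ) : ℂ) = (n : ℂ) - ((n / d : ℕ) : ℂ) * d := by
      have h2 : ((d * (n / d) + n % d : ℕ) : ℂ) = (n : ℂ) := by
        exact_mod_cast congrArg (fun x : ℕ => (x : ℂ)) (Nat.div_add_mod n d)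
      push_cast at h2
      linear_combination h2
    have key : ((2 * Real.pi * n / d : ℝ) : ℂ) * Complex.I
        = 2 * Real.pi * Complex.I * ((n % d : ℕ) : ℂ) / d
          + ((n / d : ℕ) : ℂ) * (2 * Real.pi * Complex.I) := by
      rw [hmod]
      push_cast
      field_simp
      ring
    rw [key, Complex.exp_add]
    have h1 : Complex.exp (((n / d : ℕ) : ℂ) * (2 * Real.pi * Complex.I)) = 1 := by
      have h2 := Complex.exp_int_mul_two_pi_mul_I ((n / d : ℕ) : ℤ)
      push_cast at h2
      exact h2
    rw [h1, mul_one]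
  -- sum of g over all of ZMod d vanishes
  have hsum_g : ∑ k : ZMod d, g k = 0 := by
    rw [hgdef]
    exact exp_sum_zero (by omega)
  -- lower bound, with an extra factor 2
  have hlow : ∀ ξ : ℂ, ‖ξ‖ = 1 →
      2 * ((a : ℝ) * L * A ^ 2) ≤ (1 / 2) * ∑ ℓ : Fin L, ∑ φ ∈ Φ ℓ, ‖φ f - ξ * φ g‖ ^ 2 := by
    intro ξ hξ
    set h : EuclideanSpace ℂ (ZMod d) := f - ξ • g with hhdef
    have happ : ∀ φ : EuclideanSpace ℂ (ZMod d) →L[ℂ] ℂ, φ f - ξ * φ g = φ h := by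
      intro φ
      rw [hhdef, map_sub, map_smul, smul_eq_mul]
    have hsum1 : A ^ 2 * (2 * ∑ k : ZMod d, ‖h k‖ ^ 2)
        ≤ ∑ ℓ : Fin L, ∑ φ ∈ Φ ℓ, ‖φ h‖ ^ 2 := by
      have h2w : ∑ ℓ : Fin L, ∑ m : Fin (2 * a),
          ‖h ((((ℓ : ℕ) * a + (m : ℕ) : ℕ) : ZMod d))‖ ^ 2
          = 2 * ∑ k : ZMod d, ‖h k‖ ^ 2 := sum_two_window ha hd (fun k => ‖h k‖ ^ 2)
      rw [← h2w, Finset.mul_sum]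
      exact Finset.sum_le_sum fun ℓ _ => (hframe ℓ h).1
    have hval : ∀ k : ZMod d, ‖h k‖ ^ 2 = 2 - 2 * (ξ * g k).re := by
      intro k
      have hk : h k = 1 - ξ * g k := by
        rw [hhdef, PiLp.sub_apply, PiLp.smul_apply, smul_eq_mul, hf1 k]
      rw [hk]
      have hz : ‖ξ * g k‖ = 1 := by rw [norm_mul, hξ, hgnorm k, mul_one]
      have hz2 : (ξ * g k).re ^ 2 + (ξ * g k).im ^ 2 = 1 := by
        have h3 : ‖ξ * g k‖ ^ 2 = 1 := by rw [hz]; norm_num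
        rw [Complex.sq_norm, Complex.normSq_apply] at h3
        nlinarith
      rw [Complex.sq_norm, Complex.normSq_apply]
      simp only [Complex.sub_re, Complex.sub_im, Complex.one_re, Complex.one_im]
      nlinarith
    have hsumk : ∑ k : ZMod d, ‖h k‖ ^ 2 = 2 * (d : ℝ) := by
      have h1 : ∑ k : ZMod d, ‖h k‖ ^ 2 = ∑ k : ZMod d, (2 - 2 * (ξ * g k).re) :=
        Finset.sum_congr rfl fun k _ => hval k
      rw [h1, Finset.sum_sub_distrib, ← Finset.mul_sum, ← Complex.re_sum, ← Finset.mul_sum,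
        hsum_g, mul_zero, Complex.zero_re, mul_zero, sub_zero, Finset.sum_const,
        Finset.card_univ, ZMod.card, nsmul_eq_mul]
      ring
    rw [hsumk, hdR] at hsum1
    simp only [happ]
    linarith
  -- choice of a window-adapted phase, and the per-window upper bound
  set c : ℝ := Real.cos (2 * Real.pi / L) with hcdef
  have h2half : 2 * Real.pi / L ≤ Real.pi / 2 := by
    rw [div_le_div_iff₀ hLR (by norm_num)]
    nlinarith
  have h2pos : 0 < 2 * Real.pi / L := by positivity
  have h2pi : 2 * Real.pi / L ≤ Real.pi := by nlinarith
  have hc0 : 0 ≤ c := by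
    apply Real.cos_nonneg_of_mem_Icc
    constructor
    · nlinarith
    · exact h2half
  have hc1 : c < 1 := by
    have h3 := Real.cos_lt_cos_of_nonneg_of_le_pi (le_refl 0) h2pi h2pos
    rwa [Real.cos_zero] at h3
  have hwin : ∀ ℓ : Fin L, ∃ ξℓ : ℂ, ‖ξℓ‖ = 1 ∧
      ∑ m : Fin (2 * a), ‖(f - ξℓ • g) ((((ℓ : ℕ) * a + (m : ℕ) : ℕ) : ZMod d))‖ ^ 2
        ≤ 2 * (a : ℝ) * (2 - 2 * c) := by
    intro ℓ
    set θ0 : ℝ := -(2 * Real.pi * ((ℓ : ℕ) * a + a)) / d with hθ0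
    refine ⟨Complex.exp ((θ0 : ℂ) * Complex.I),
      by rw [Complex.norm_exp_ofReal_mul_I], ?_⟩
    have hentry : ∀ m : Fin (2 * a),
        ‖(f - Complex.exp ((θ0 : ℂ) * Complex.I) • g)
            ((((ℓ : ℕ) * a + (m : ℕ) : ℕ) : ZMod d))‖ ^ 2 ≤ 2 - 2 * c := by
      intro m
      set θm : ℝ := 2 * Real.pi * ((ℓ : ℕ) * a + (m : ℕ)) / d with hθm
      have happly : (f - Complex.exp ((θ0 : ℂ) * Complex.I) • g)
            ((((ℓ : ℕ) * a + (m : ℕ) : ℕ) : ZMod d))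
          = 1 - Complex.exp ((θ0 : ℂ) * Complex.I)
              * g ((((ℓ : ℕ) * a + (m : ℕ) : ℕ) : ZMod d)) := by
        rw [PiLp.sub_apply, PiLp.smul_apply, smul_eq_mul,
          hf1 ((((ℓ : ℕ) * a + (m : ℕ) : ℕ) : ZMod d))]
      have h1 : Complex.exp ((θ0 : ℂ) * Complex.I)
            * g ((((ℓ : ℕ) * a + (m : ℕ) : ℕ) : ZMod d))
          = Complex.exp (((θ0 + θm : ℝ) : ℂ) * Complex.I) := by
        rw [hgcast ((ℓ : ℕ) * a + (m : ℕ)), ← Complex.exp_add]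
        congr 1
        rw [hθm]
        push_cast
        ring
      rw [happly, h1, norm_one_sub_exp]
      have hvalθ : θ0 + θm = 2 * Real.pi * ((m : ℝ) - a) / d := by
        rw [hθ0, hθm]
        push_cast
        ring
      have hmabs : |(m : ℝ) - a| ≤ (a : ℝ) := by
        have hmlt : ((m : ℕ) : ℝ) < 2 * a := by exact_mod_cast m.isLt
        have hm0 : (0 : ℝ) ≤ ((m : ℕ) : ℝ) := by positivity
        rw [abs_le]
        constructor <;> nlinarith
      have habs : |θ0 + θm| ≤ 2 * Real.pi / L := by
        rw [hvalθ]
        have h4 : |2 * Real.pi * ((m : ℝ) - a) / d| = 2 * Real.pi * |(m : ℝ) - a| / d := by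
          rw [abs_div, abs_of_nonneg (le_of_lt hdR0), abs_mul,
            abs_of_nonneg (by positivity : (0 : ℝ) ≤ 2 * Real.pi)]
        rw [h4, hdR, div_le_div_iff₀ (by positivity) hLR]
        have h5 : 0 ≤ (2 * Real.pi * L) * ((a : ℝ) - |(m : ℝ) - a|) :=
          mul_nonneg (by positivity) (by linarith [hmabs])
        nlinarith [h5]
      have hcos : c ≤ Real.cos (θ0 + θm) := by
        rw [← Real.cos_abs (θ0 + θm)]
        exact Real.cos_le_cos_of_nonneg_of_le_pi (abs_nonneg _) h2pi habs
      linarith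
    calc ∑ m : Fin (2 * a), ‖(f - Complex.exp ((θ0 : ℂ) * Complex.I) • g)
            ((((ℓ : ℕ) * a + (m : ℕ) : ℕ) : ZMod d))‖ ^ 2
        ≤ ∑ _m : Fin (2 * a), (2 - 2 * c) := Finset.sum_le_sum fun m _ => hentry m
      _ = ((2 * a : ℕ) : ℝ) * (2 - 2 * c) := by
          rw [Finset.sum_const, Finset.card_univ, Fintype.card_fin, nsmul_eq_mul]
      _ = 2 * (a : ℝ) * (2 - 2 * c) := by push_cast; ring
  -- total upper bound
  have hUbound : ∑ ℓ : Fin L, ∑ φ ∈ Φ ℓ, (‖φ f‖ - ‖φ g‖) ^ 2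
      ≤ (L : ℝ) * (B ^ 2 * (2 * (a : ℝ) * (2 - 2 * c))) := by
    have hper : ∀ ℓ : Fin L, ∑ φ ∈ Φ ℓ, (‖φ f‖ - ‖φ g‖) ^ 2
        ≤ B ^ 2 * (2 * (a : ℝ) * (2 - 2 * c)) := by
      intro ℓ
      obtain ⟨ξℓ, hξℓ, hwb⟩ := hwin ℓ
      have step1 : ∑ φ ∈ Φ ℓ, (‖φ f‖ - ‖φ g‖) ^ 2
          ≤ ∑ φ ∈ Φ ℓ, ‖φ (f - ξℓ • g)‖ ^ 2 := by
        refine Finset.sum_le_sum fun φ _ => ?_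
        have hphieq : φ (f - ξℓ • g) = φ f - ξℓ * φ g := by
          rw [map_sub, map_smul, smul_eq_mul]
        rw [hphieq]
        have h2 : |‖φ f‖ - ‖φ g‖| ≤ ‖φ f - ξℓ * φ g‖ := by
          have h3 := abs_norm_sub_norm_le (φ f) (ξℓ * φ g)
          rwa [norm_mul, hξℓ, one_mul] at h3
        calc (‖φ f‖ - ‖φ g‖) ^ 2 = |‖φ f‖ - ‖φ g‖| ^ 2 := (sq_abs _).symm
          _ ≤ ‖φ f - ξℓ * φ g‖ ^ 2 := pow_le_pow_left₀ (abs_nonneg _) h2 2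
      refine le_trans step1 (le_trans (hframe ℓ (f - ξℓ • g)).2 ?_)
      exact mul_le_mul_of_nonneg_left hwb (sq_nonneg B)
    calc ∑ ℓ : Fin L, ∑ φ ∈ Φ ℓ, (‖φ f‖ - ‖φ g‖) ^ 2
        ≤ ∑ _ℓ : Fin L, B ^ 2 * (2 * (a : ℝ) * (2 - 2 * c)) :=
          Finset.sum_le_sum fun ℓ _ => hper ℓ
      _ = (L : ℝ) * (B ^ 2 * (2 * (a : ℝ) * (2 - 2 * c))) := by
          rw [Finset.sum_const, Finset.card_univ, Fintype.card_fin, nsmul_eq_mul]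
  -- the cosine identity for the stated bound
  have hdcos : Real.cos (4 * Real.pi * a / d) = 2 * c ^ 2 - 1 := by
    have harg : (4 * Real.pi * (a : ℝ) / d) = 2 * (2 * Real.pi / L) := by
      rw [hdR]
      field_simp
      ring
    rw [harg, Real.cos_two_mul, hcdef]
  -- assemble
  refine ⟨f, g, hf1, hgval, hfB, hgB, ?_, ?_, ?_⟩
  · -- stated lower bound
    intro ξ hξ
    have h1 := hlow ξ hξ
    nlinarith [sq_nonneg A, mul_pos haR hLR]
  · -- stated upper bound
    rw [hdcos]
    have hpos : 0 ≤ (a : ℝ) * B ^ 2 * L := by positivity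
    nlinarith [hUbound, mul_nonneg hpos (mul_nonneg hc0 (by linarith : (0 : ℝ) ≤ 1 - c))]
  · -- bound on the stability constant
    intro C hC
    haveI : Nonempty {ξ : ℂ // ‖ξ‖ = 1} := ⟨⟨1, norm_one⟩⟩
    have hCfg := hC f hfB g hgB
    have hU0 : (0 : ℝ) ≤ (1 / 2) * ∑ ℓ : Fin L, ∑ φ ∈ Φ ℓ, (‖φ f‖ - ‖φ g‖) ^ 2 := by positivity
    have hLow2 : Real.sqrt (2 * ((a : ℝ) * L * A ^ 2))
        ≤ C * Real.sqrt ((1 / 2) * ∑ ℓ : Fin L, ∑ φ ∈ Φ ℓ, (‖φ f‖ - ‖φ g‖) ^ 2) := by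
      refine le_trans (le_ciInf fun ξ => ?_) hCfg
      exact Real.sqrt_le_sqrt (hlow ξ.1 ξ.2)
    have hsq2 : (0 : ℝ) < 2 * ((a : ℝ) * L * A ^ 2) := by positivity
    have hsqrtpos : 0 < Real.sqrt (2 * ((a : ℝ) * L * A ^ 2)) := Real.sqrt_pos.mpr hsq2
    have hCpos : 0 < C := by
      by_contra hneg
      push_neg at hneg
      have h1 : C * Real.sqrt ((1 / 2) * ∑ ℓ : Fin L, ∑ φ ∈ Φ ℓ, (‖φ f‖ - ‖φ g‖) ^ 2) ≤ 0 :=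
        mul_nonpos_of_nonpos_of_nonneg hneg (Real.sqrt_nonneg _)
      linarith
    -- rewrite the cosine using periodicity
    set q : ℕ := 2 * a / L with hq
    set k : ℕ := 2 * a % L with hk
    have hkL : k < L := Nat.mod_lt _ hL0
    have hqk : 2 * a = L * q + k := (Nat.div_add_mod (2 * a) L).symm
    have h2a : (2 * (a : ℝ)) = (L : ℝ) * q + k := by exact_mod_cast hqk
    have hcoseq : Real.cos (4 * Real.pi * a / L) = Real.cos (2 * Real.pi * k / L) := by
      have harg : (4 * Real.pi * (a : ℝ) / L)
          = 2 * Real.pi * k / L + (q : ℤ) * (2 * Real.pi) := by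
        rw [show (4 * Real.pi * (a : ℝ) / L) = 2 * Real.pi * (2 * (a : ℝ)) / L by ring, h2a]
        push_cast
        field_simp
        ring
      rw [harg, Real.cos_add_int_mul_two_pi]
    by_cases hk0 : k = 0
    · have h0 : (1 : ℝ) - Real.cos (4 * Real.pi * a / L) = 0 := by
        rw [hcoseq, hk0]
        simp
      rw [h0, Real.sqrt_zero, inv_zero, mul_zero]
      exact hCpos.le
    · have hk1 : 1 ≤ k := Nat.one_le_iff_ne_zero.mpr hk0
      have hk1R : (1 : ℝ) ≤ (k : ℝ) := by exact_mod_cast hk1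
      have hkLR : (k : ℝ) < (L : ℝ) := by exact_mod_cast hkL
      have hckc : Real.cos (2 * Real.pi * k / L) ≤ c := by
        by_cases h2k : 2 * k ≤ L
        · have h2kR : 2 * (k : ℝ) ≤ (L : ℝ) := by exact_mod_cast h2k
          have hx1 : 2 * Real.pi / L ≤ 2 * Real.pi * k / L := by
            rw [div_le_div_iff₀ hLR hLR]
            nlinarith [mul_nonneg (mul_nonneg (by positivity : (0 : ℝ) ≤ 2 * Real.pi)
              (by linarith : (0 : ℝ) ≤ (k : ℝ) - 1)) hLR.le]
          have hx2 : 2 * Real.pi * k / L ≤ Real.pi := by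
            rw [div_le_iff₀ hLR]
            nlinarith
          exact Real.cos_le_cos_of_nonneg_of_le_pi (le_of_lt h2pos) hx2 hx1
        · push_neg at h2k
          have h2kR : (L : ℝ) < 2 * (k : ℝ) := by exact_mod_cast h2k
          have hLk : ((L - k : ℕ) : ℝ) = (L : ℝ) - k := by
            push_cast [Nat.cast_sub (le_of_lt hkL)]
            ring
          have heq2 : 2 * Real.pi * k / L = 2 * Real.pi - 2 * Real.pi * ((L - k : ℕ) : ℝ) / L := by
            rw [hLk]
            field_simp
            ring
          rw [heq2, Real.cos_two_pi_sub]
          have hk1L : (k : ℝ) + 1 ≤ (L : ℝ) := by exact_mod_cast hkL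
          have hx1 : 2 * Real.pi / L ≤ 2 * Real.pi * ((L - k : ℕ) : ℝ) / L := by
            rw [hLk, div_le_div_iff₀ hLR hLR]
            nlinarith [mul_nonneg (mul_nonneg (by positivity : (0 : ℝ) ≤ 2 * Real.pi)
              (by linarith : (0 : ℝ) ≤ (L : ℝ) - (k : ℝ) - 1)) hLR.le]
          have hx2 : 2 * Real.pi * ((L - k : ℕ) : ℝ) / L ≤ Real.pi := by
            rw [hLk, div_le_iff₀ hLR]
            nlinarith
          exact Real.cos_le_cos_of_nonneg_of_le_pi (le_of_lt h2pos) hx2 hx1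
      set D : ℝ := 1 - Real.cos (4 * Real.pi * a / L) with hD
      have hD1 : 1 - c ≤ D := by
        rw [hD, hcoseq]
        linarith
      have hDpos : 0 < D := by linarith
      have hUb : (1 / 2) * ∑ ℓ : Fin L, ∑ φ ∈ Φ ℓ, (‖φ f‖ - ‖φ g‖) ^ 2
          ≤ 2 * (a : ℝ) * L * B ^ 2 * D := by
        have h6 : 2 * (a : ℝ) * L * B ^ 2 * (1 - c) ≤ 2 * (a : ℝ) * L * B ^ 2 * D := by
          have h7 : (0 : ℝ) ≤ 2 * (a : ℝ) * L * B ^ 2 := by positivity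
          exact mul_le_mul_of_nonneg_left hD1 h7
        calc (1 / 2) * ∑ ℓ : Fin L, ∑ φ ∈ Φ ℓ, (‖φ f‖ - ‖φ g‖) ^ 2
            ≤ (1 / 2) * ((L : ℝ) * (B ^ 2 * (2 * (a : ℝ) * (2 - 2 * c)))) := by
              linarith [hUbound]
          _ = 2 * (a : ℝ) * L * B ^ 2 * (1 - c) := by ring
          _ ≤ 2 * (a : ℝ) * L * B ^ 2 * D := h6
      have h2 : Real.sqrt (2 * ((a : ℝ) * L * A ^ 2))
          ≤ C * Real.sqrt (2 * (a : ℝ) * L * B ^ 2 * D) :=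
        le_trans hLow2 (mul_le_mul_of_nonneg_left (Real.sqrt_le_sqrt hUb) hCpos.le)
      have e1 : Real.sqrt (2 * ((a : ℝ) * L * A ^ 2)) = Real.sqrt (2 * (a : ℝ) * L) * A := by
        rw [show 2 * ((a : ℝ) * L * A ^ 2) = (2 * (a : ℝ) * L) * A ^ 2 by ring,
          Real.sqrt_mul (by positivity), Real.sqrt_sq hA.le]
      have e2 : Real.sqrt (2 * (a : ℝ) * L * B ^ 2 * D)
          = Real.sqrt (2 * (a : ℝ) * L) * (B * Real.sqrt D) := by
        rw [show 2 * (a : ℝ) * L * B ^ 2 * D = (2 * (a : ℝ) * L) * (B ^ 2 * D) by ring,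
          Real.sqrt_mul (by positivity), Real.sqrt_mul (by positivity) D, Real.sqrt_sq hBpos.le]
      rw [e1, e2] at h2
      have hs2pos : 0 < Real.sqrt (2 * (a : ℝ) * L) := Real.sqrt_pos.mpr (by positivity)
      have h3 : A ≤ C * (B * Real.sqrt D) := by
        have h4 : Real.sqrt (2 * (a : ℝ) * L) * A
            ≤ Real.sqrt (2 * (a : ℝ) * L) * (C * (B * Real.sqrt D)) := by
          calc Real.sqrt (2 * (a : ℝ) * L) * A
              ≤ C * (Real.sqrt (2 * (a : ℝ) * L) * (B * Real.sqrt D)) := h2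
            _ = Real.sqrt (2 * (a : ℝ) * L) * (C * (B * Real.sqrt D)) := by ring
        exact le_of_mul_le_mul_left h4 hs2pos
      have hsD : 0 < Real.sqrt D := Real.sqrt_pos.mpr hDpos
      rw [← div_eq_mul_inv, div_div, div_le_iff₀ (by positivity)]
      calc A ≤ C * (B * Real.sqrt D) := h3
        _ = C * (B * Real.sqrt D) := rfl
end
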